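/- arXiv:2201.13315 — 3 statements merged into one kernel-verified Lean document; each statement's English description precedes it below -/
import Mathlib

section
/- For real α, β > -1 and natural number n, ∫_{-1}^1 t^n (1-t)^α (1+t)^β P_n^{(α,β)}(t) dt = B(α+n+1, β+n+1) · 2^{α+β+n+1}. -/
open scoped Real Topology
open Filter

noncomputable def poch (x : ℝ) (n : ℕ) : ℝ := ∏ i ∈ Finset.range n, (x + i)

noncomputable def pochC (x : ℂ) (n : ℕ) : ℂ := ∏ i ∈ Finset.range n, (x + i)

/-- Jacobi polynomial `P_n^{(α,β)}(t)` via its hypergeometric representation. -/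
noncomputable def jacobiP (α β : ℝ) (n : ℕ) (t : ℝ) : ℝ :=
  poch (α + 1) n / n.factorial *
    ∑ k ∈ Finset.range (n + 1),
      poch (-(n : ℝ)) k * poch ((n : ℝ) + α + β + 1) k / (poch (α + 1) k * k.factorial) *
        ((1 - t) / 2) ^ k

/-- Gauss hypergeometric series (real). -/
noncomputable def hyp2F1 (a b c x : ℝ) : ℝ :=
  ∑' k : ℕ, poch a k * poch b k / (poch c k * k.factorial) * x ^ k

/-- Gauss hypergeometric series (complex). -/
noncomputable def hyp2F1C (a b c x : ℂ) : ℂ :=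
  ∑' k : ℕ, pochC a k * pochC b k / (pochC c k * k.factorial) * x ^ k

/-- Beta function `B(a,b) = Γ(a)Γ(b)/Γ(a+b)`. -/
noncomputable def betaR (a b : ℝ) : ℝ := Real.Gamma a * Real.Gamma b / Real.Gamma (a + b)

/-- Generalized binomial coefficient `C(x,n) = x(x-1)⋯(x-n+1)/n!`. -/
noncomputable def genBinom (x : ℝ) (n : ℕ) : ℝ :=
  (∏ i ∈ Finset.range n, (x - i)) / n.factorial

/-- Gegenbauer (ultraspherical) polynomial `C_n^{(a)}(t)`. -/
noncomputable def gegenbauerC (a : ℝ) (n : ℕ) (t : ℝ) : ℝ :=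
  ∑ k ∈ Finset.range (n / 2 + 1),
    (-1) ^ k * poch a (n - k) / (k.factorial * (n - 2 * k).factorial) * (2 * t) ^ (n - 2 * k)

section Aux
open MeasureTheory Set intervalIntegral

lemma poch_zero (x : ℝ) : poch x 0 = 1 := by simp [poch]

lemma poch_succ (x : ℝ) (k : ℕ) : poch x (k+1) = poch x k * (x + k) := by
  simp [poch, Finset.prod_range_succ]

lemma poch_succ' (x : ℝ) (k : ℕ) : poch x (k+1) = x * poch (x+1) k := by
  induction k with
  | zero => simp [poch]
  | succ k ih =>
      rw [poch_succ, ih, poch_succ]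
      push_cast; ring

lemma poch_pos {x : ℝ} (hx : 0 < x) (k : ℕ) : 0 < poch x k :=
  Finset.prod_pos fun i _ => by positivity

lemma poch_neg_nat (n : ℕ) {k : ℕ} (h : n < k) : poch (-(n:ℝ)) k = 0 := by
  refine Finset.prod_eq_zero (Finset.mem_range.2 h) ?_
  simp

/-- Real Beta integral. -/
lemma betaIntegral_real {a b : ℝ} (ha : 0 < a) (hb : 0 < b) :
    ∫ x in (0:ℝ)..1, x ^ (a-1) * (1-x) ^ (b-1) = betaR a b := by
  have h := Complex.Gamma_mul_Gamma_eq_betaIntegral (s := (a:ℂ)) (t := (b:ℂ))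
    (by simpa using ha) (by simpa using hb)
  have hcongr : Complex.betaIntegral a b
      = ((∫ x in (0:ℝ)..1, x ^ (a-1) * (1-x) ^ (b-1) : ℝ) : ℂ) := by
    rw [← intervalIntegral.integral_ofReal]
    refine intervalIntegral.integral_congr fun x hx => ?_
    rw [Set.uIcc_of_le (by norm_num : (0:ℝ) ≤ 1)] at hx
    push_cast [Complex.ofReal_cpow hx.1, Complex.ofReal_cpow (sub_nonneg.2 hx.2)]
    norm_num
  rw [hcongr] at h
  have hG : Complex.Gamma ((a:ℂ) + b) = (Real.Gamma (a+b) : ℂ) := by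
    rw [← Complex.ofReal_add, Complex.Gamma_ofReal]
  rw [Complex.Gamma_ofReal, Complex.Gamma_ofReal, hG] at h
  have h3 : Real.Gamma a * Real.Gamma b
      = Real.Gamma (a+b) * ∫ x in (0:ℝ)..1, x ^ (a-1) * (1-x) ^ (b-1) := by
    exact_mod_cast h
  have hGne : Real.Gamma (a+b) ≠ 0 := (Real.Gamma_pos_of_pos (by linarith)).ne'
  rw [betaR, eq_div_iff hGne]
  linear_combination h3.symm

/-- The pure weight integral. -/
lemma integral_weight {a b : ℝ} (ha : -1 < a) (hb : -1 < b) :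
    ∫ t in (-1:ℝ)..1, (1-t) ^ a * (1+t) ^ b = 2 ^ (a+b+1) * betaR (b+1) (a+1) := by
  have key := intervalIntegral.integral_comp_mul_add
    (a := (0:ℝ)) (b := 1) (c := 2) (d := -1)
    (f := fun t => (1-t) ^ a * (1+t) ^ b) two_ne_zero
  have h1 : (∫ x in (0:ℝ)..1, (1-(2*x + -1)) ^ a * (1+(2*x + -1)) ^ b)
      = 2 ^ (a+b) * ∫ x in (0:ℝ)..1, x ^ ((b+1)-1) * (1-x) ^ ((a+1)-1) := by
    rw [← intervalIntegral.integral_const_mul]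
    refine intervalIntegral.integral_congr fun x hx => ?_
    rw [Set.uIcc_of_le (by norm_num : (0:ℝ) ≤ 1)] at hx
    have e1 : 1-(2*x + -1) = 2*(1-x) := by ring
    have e2 : 1+(2*x + -1) = 2*x := by ring
    rw [e1, e2, Real.mul_rpow (by norm_num) (by linarith [hx.2]),
      Real.mul_rpow (by norm_num) hx.1]
    simp only [add_sub_cancel_right]
    rw [Real.rpow_add (by norm_num : (0:ℝ) < 2) a b]
    ring
  rw [h1, betaIntegral_real (by linarith) (by linarith)] at key
  have e3 : (2:ℝ) * 0 + -1 = -1 := by norm_num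
  have e4 : (2:ℝ) * 1 + -1 = 1 := by norm_num
  rw [e3, e4, smul_eq_mul] at key
  rw [show (∫ t in (-1:ℝ)..1, (1-t) ^ a * (1+t) ^ b)
      = 2 * (2⁻¹ * ∫ x in (-1:ℝ)..1, (1-x) ^ a * (1+x) ^ b) from by ring,
    ← key, Real.rpow_add_one (by norm_num : (2:ℝ) ≠ 0) (a+b)]
  ring

lemma betaR_comm (a b : ℝ) : betaR a b = betaR b a := by
  rw [betaR, betaR, add_comm, mul_comm]

/-- Integrability of weight times continuous. -/
lemma intervalIntegrable_weight_mul {a b : ℝ} (ha : -1 < a) (hb : -1 < b)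
    {p : ℝ → ℝ} (hp : Continuous p) :
    IntervalIntegrable (fun t => (1-t) ^ a * (1+t) ^ b * p t) volume (-1) 1 := by
  have hw : IntervalIntegrable (fun t => (1-t) ^ a * (1+t) ^ b) volume (-1) 1 := by
    have h01 : IntervalIntegrable (fun t => (1-t) ^ a * (1+t) ^ b) volume 0 1 := by
      have h1 : IntervalIntegrable (fun t : ℝ => (1-t) ^ a) volume 0 1 := by
        have := (intervalIntegral.intervalIntegrable_rpow' (a := 0) (b := 1) ha).comp_sub_left 1
        simpa using this.symm
      have h2 : ContinuousOn (fun t : ℝ => (1+t) ^ b) (Set.uIcc 0 1) := by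
        refine ContinuousOn.rpow_const (by fun_prop) fun x hx => ?_
        rw [Set.uIcc_of_le (by norm_num : (0:ℝ) ≤ 1)] at hx
        exact Or.inl (by intro h; linarith [hx.1])
      exact h1.mul_continuousOn h2
    have hm0 : IntervalIntegrable (fun t => (1-t) ^ a * (1+t) ^ b) volume (-1) 0 := by
      have h1 : IntervalIntegrable (fun t : ℝ => (1+t) ^ b) volume (-1) 0 := by
        have := (intervalIntegral.intervalIntegrable_rpow' (a := 0) (b := 1) hb).comp_add_right 1
        norm_num at this
        convert this using 2 with t
        ring_nf
      have h2 : ContinuousOn (fun t : ℝ => (1-t) ^ a) (Set.uIcc (-1) 0) := by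
        refine ContinuousOn.rpow_const (by fun_prop) fun x hx => ?_
        rw [Set.uIcc_of_le (by norm_num : (-1:ℝ) ≤ 0)] at hx
        exact Or.inl (by intro h; linarith [hx.2])
      have := h1.mul_continuousOn h2
      have e : (fun t : ℝ => (1-t) ^ a * (1+t) ^ b) = fun t : ℝ => (1+t) ^ b * (1-t) ^ a :=
        funext fun t => mul_comm _ _
      rw [e]; exact this
    exact hm0.trans h01
  exact hw.mul_continuousOn hp.continuousOn

end Aux

section Alg

/-- Coefficient of the Jacobi polynomial. -/
noncomputable def jc (α β : ℝ) (n k : ℕ) : ℝ :=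
  poch (-(n:ℝ)) k * poch ((n:ℝ) + α + β + 1) k / (poch (α+1) k * k.factorial)

lemma jacobiP_eq (α β : ℝ) (n : ℕ) (t : ℝ) : jacobiP α β n t
    = poch (α+1) n / n.factorial * ∑ k ∈ Finset.range (n+1), jc α β n k * ((1-t)/2)^k := rfl

lemma jc_zero (α β : ℝ) (n : ℕ) : jc α β n 0 = 1 := by
  simp [jc, poch_zero]

lemma jc_top (α β : ℝ) (n : ℕ) {k : ℕ} (h : n < k) : jc α β n k = 0 := by
  simp [jc, poch_neg_nat n h]

lemma hasDerivAt_jacobiP (α β : ℝ) (n : ℕ) (t : ℝ) :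
    HasDerivAt (fun t => jacobiP α β n t)
      (poch (α+1) n / n.factorial *
        ∑ k ∈ Finset.range (n+1), jc α β n k * ((k:ℝ) * ((1-t)/2)^(k-1) * (-1/2))) t := by
  have hu : HasDerivAt (fun t : ℝ => (1-t)/2) (-1/2) t := by
    simpa using ((hasDerivAt_id t).const_sub 1).div_const 2
  have hsum := HasDerivAt.sum (u := Finset.range (n+1))
    (fun k _ => ((hu.pow k).const_mul (jc α β n k)))
  have := hsum.const_mul (poch (α+1) n / n.factorial)
  simp only [jacobiP_eq, Finset.mul_sum]
  convert this using 2 with k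
  · rfl
  · rfl
  · rw [Finset.sum_apply, Finset.mul_sum]; rfl
  · rw [Finset.mul_sum]

set_option maxHeartbeats 2000000 in
/-- The fundamental coefficient identity. -/
lemma coeff_id (α β : ℝ) (hα : -1 < α) (n k : ℕ) :
    poch (α+1+1) n / n.factorial * (jc (α+1) (β+1) n (k+1) * (-2*(α+1+((k:ℝ)+1)))) +
      poch (α+1+1) n / n.factorial * (jc (α+1) (β+1) n k * (2*(α+β+2+(k:ℝ)))) =
    -(2*((n:ℝ)+1)) * (poch (α+1) (n+1) / (n+1).factorial * jc α β (n+1) (k+1)) := by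
  have hP3 : poch (α+2) k ≠ 0 := (poch_pos (by linarith) k).ne'
  have hkf : (k.factorial : ℝ) ≠ 0 := by positivity
  have hnf : (n.factorial : ℝ) ≠ 0 := by positivity
  have hα1 : (α+1) ≠ 0 := by linarith
  have hk1 : ((k:ℝ)+1) ≠ 0 := by positivity
  have hn1 : ((n:ℝ)+1) ≠ 0 := by positivity
  have e1 : poch (-(((n+1:ℕ)):ℝ)) (k+1) = (-((n:ℝ)+1)) * poch (-(n:ℝ)) k := by
    rw [poch_succ']
    rw [show (-(((n+1:ℕ)):ℝ)+1) = -(n:ℝ) from by push_cast; ring,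
        show (-(((n+1:ℕ)):ℝ)) = -((n:ℝ)+1) from by push_cast; ring]
  have e2 : poch ((((n+1:ℕ)):ℝ)+α+β+1) (k+1)
      = ((n:ℝ)+α+β+2) * poch (((n:ℝ)+α+β+2)+1) k := by
    rw [poch_succ']
    rw [show ((((n+1:ℕ)):ℝ)+α+β+1+1) = ((n:ℝ)+α+β+2)+1 from by push_cast; ring,
        show ((((n+1:ℕ)):ℝ)+α+β+1) = (n:ℝ)+α+β+2 from by push_cast; ring]
  have e3 : poch (α+1) (k+1) = (α+1) * poch (α+2) k := by
    rw [poch_succ', show (α+1+1 : ℝ) = α+2 from by ring]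
  have e4 : poch (α+1) (n+1) = (α+1) * poch (α+2) n := by
    rw [poch_succ', show (α+1+1 : ℝ) = α+2 from by ring]
  simp only [jc]
  rw [show ((n:ℝ)) + (α+1) + (β+1) + 1 = ((n:ℝ)+α+β+2)+1 from by ring,
      show ((α:ℝ)+1+1) = α+2 from by ring]
  rw [poch_succ (-(n:ℝ)) k, poch_succ (((n:ℝ)+α+β+2)+1) k, poch_succ (α+2) k,
      e1, e2, e3, e4, Nat.factorial_succ (n), Nat.factorial_succ (k)]
  clear e1 e2 e3 e4
  push_cast
  revert hP3 hkf hnf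
  generalize poch (-(n:ℝ)) k = P1
  generalize poch ((n:ℝ)+α+β+2+1) k = P2
  generalize poch (α+2) k = P3
  generalize poch (α+2) n = P4
  generalize ((k.factorial : ℕ) : ℝ) = K
  generalize ((n.factorial : ℕ) : ℝ) = N
  intro hP3 hkf hnf
  have hαk : (α+2+(k:ℝ)) ≠ 0 := by have : (0:ℝ) ≤ k := Nat.cast_nonneg k; intro h; linarith
  field_simp
  ring

end Alg

section Alg2

lemma zero_coeff_id (α β : ℝ) (hα : -1 < α) (n : ℕ) :
    poch (α+1+1) n / n.factorial * (jc (α+1) (β+1) n 0 * (-2*(α+1))) =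
    -(2*((n:ℝ)+1)) * (poch (α+1) (n+1) / (n+1).factorial * jc α β (n+1) 0) := by
  have hnf : (n.factorial : ℝ) ≠ 0 := by positivity
  have hn1 : ((n:ℝ)+1) ≠ 0 := by positivity
  rw [jc_zero, jc_zero, poch_succ' (α+1) n, Nat.factorial_succ,
      show (α+1+1 : ℝ) = α+2 from by ring]
  push_cast
  field_simp

/-- The lowering identity, as an identity of functions. -/
lemma jacobi_alg (α β : ℝ) (hα : -1 < α) (n : ℕ) (t : ℝ) :
    (-(α+1)) * (1+t) * jacobiP (α+1) (β+1) n t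
      + (β+1) * (1-t) * jacobiP (α+1) (β+1) n t
      + (1-t) * (1+t) * (poch (α+1+1) n / n.factorial *
          ∑ k ∈ Finset.range (n+1), jc (α+1) (β+1) n k * ((k:ℝ) * ((1-t)/2)^(k-1) * (-1/2)))
      = -(2*((n:ℝ)+1)) * jacobiP α β (n+1) t := by
  have key1 : (-(α+1)) * (1+t) * jacobiP (α+1) (β+1) n t
      + (β+1) * (1-t) * jacobiP (α+1) (β+1) n t
      + (1-t) * (1+t) * (poch (α+1+1) n / n.factorial *
          ∑ k ∈ Finset.range (n+1), jc (α+1) (β+1) n k * ((k:ℝ) * ((1-t)/2)^(k-1) * (-1/2)))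
      = ∑ k ∈ Finset.range (n+1),
          (poch (α+1+1) n / n.factorial * (jc (α+1) (β+1) n k * (-2*(α+1+(k:ℝ)))) * ((1-t)/2)^k
            + poch (α+1+1) n / n.factorial * (jc (α+1) (β+1) n k * (2*(α+β+2+(k:ℝ)))) * ((1-t)/2)^(k+1)) := by
    simp only [jacobiP_eq, Finset.mul_sum]
    rw [← Finset.sum_add_distrib, ← Finset.sum_add_distrib]
    refine Finset.sum_congr rfl fun k _ => ?_
    cases k with
    | zero => push_cast; ring
    | succ k =>
        rw [show ((k+1) - 1 : ℕ) = k from rfl]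
        push_cast
        ring
  have key2 : -(2*((n:ℝ)+1)) * jacobiP α β (n+1) t
      = ∑ k ∈ Finset.range (n+2),
          -(2*((n:ℝ)+1)) * (poch (α+1) (n+1) / (n+1).factorial * jc α β (n+1) k) * ((1-t)/2)^k := by
    simp only [jacobiP_eq, Finset.mul_sum]
    exact Finset.sum_congr rfl fun k _ => by ring
  rw [key1, key2]
  rw [Finset.sum_add_distrib]
  rw [Finset.sum_range_succ' (fun k =>
      poch (α+1+1) n / n.factorial * (jc (α+1) (β+1) n k * (-2*(α+1+(k:ℝ)))) * ((1-t)/2)^k) n]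
  rw [Finset.sum_range_succ' (fun k =>
      -(2*((n:ℝ)+1)) * (poch (α+1) (n+1) / (n+1).factorial * jc α β (n+1) k) * ((1-t)/2)^k) (n+1)]
  push_cast
  have htop : ∑ k ∈ Finset.range n,
        poch (α+1+1) n / n.factorial * (jc (α+1) (β+1) n (k+1) * (-2*(α+1+((k:ℝ)+1)))) * ((1-t)/2)^(k+1)
      = ∑ k ∈ Finset.range (n+1),
        poch (α+1+1) n / n.factorial * (jc (α+1) (β+1) n (k+1) * (-2*(α+1+((k:ℝ)+1)))) * ((1-t)/2)^(k+1) := by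
    rw [Finset.sum_range_succ, jc_top (α+1) (β+1) n (Nat.lt_succ_self n)]
    ring
  rw [htop]
  have hmain : ∀ k : ℕ,
      poch (α+1+1) n / n.factorial * (jc (α+1) (β+1) n (k+1) * (-2*(α+1+((k:ℝ)+1)))) * ((1-t)/2)^(k+1)
        + poch (α+1+1) n / n.factorial * (jc (α+1) (β+1) n k * (2*(α+β+2+(k:ℝ)))) * ((1-t)/2)^(k+1)
      = -(2*((n:ℝ)+1)) * (poch (α+1) (n+1) / (n+1).factorial * jc α β (n+1) (k+1)) * ((1-t)/2)^(k+1) := by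
    intro k
    have h := coeff_id α β hα n k
    calc _ = (poch (α+1+1) n / n.factorial * (jc (α+1) (β+1) n (k+1) * (-2*(α+1+((k:ℝ)+1))))
          + poch (α+1+1) n / n.factorial * (jc (α+1) (β+1) n k * (2*(α+β+2+(k:ℝ))))) * ((1-t)/2)^(k+1) := by ring
      _ = _ := by rw [h]
  have hsum : ∑ k ∈ Finset.range (n+1),
        (poch (α+1+1) n / n.factorial * (jc (α+1) (β+1) n (k+1) * (-2*(α+1+((k:ℝ)+1)))) * ((1-t)/2)^(k+1)
          + poch (α+1+1) n / n.factorial * (jc (α+1) (β+1) n k * (2*(α+β+2+(k:ℝ)))) * ((1-t)/2)^(k+1))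
      = ∑ k ∈ Finset.range (n+1),
        -(2*((n:ℝ)+1)) * (poch (α+1) (n+1) / (n+1).factorial * jc α β (n+1) (k+1)) * ((1-t)/2)^(k+1) :=
    Finset.sum_congr rfl fun k _ => hmain k
  have h0 : poch (α+1+1) n / n.factorial * (jc (α+1) (β+1) n 0 * (-2*(α+1+(0:ℝ)))) * ((1-t)/2)^(0:ℕ)
      = -(2*((n:ℝ)+1)) * (poch (α+1) (n+1) / (n+1).factorial * jc α β (n+1) 0) * ((1-t)/2)^(0:ℕ) := by
    have hz := zero_coeff_id α β hα n
    push_cast at hz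
    simp only [pow_zero, mul_one]
    rw [show (α+1+(0:ℝ)) = α+1 from by ring, hz]
  rw [Finset.sum_add_distrib] at hsum
  push_cast at h0 ⊢
  linarith [hsum, h0]

end Alg2


section Anal
open MeasureTheory Set intervalIntegral

lemma continuous_jacobiP (α β : ℝ) (n : ℕ) : Continuous (fun t => jacobiP α β n t) :=
  continuous_iff_continuousAt.2 fun t => (hasDerivAt_jacobiP α β n t).continuousAt

lemma continuous_rpow_shift (c : ℝ) {p : ℝ} (hp : 0 < p) (sgn : ℝ) :
    Continuous (fun s : ℝ => (c + sgn * s) ^ p) := by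
  have h : Continuous (fun x : ℝ => x ^ p) := by
    refine continuous_iff_continuousAt.2 fun x => ?_
    refine Real.continuousAt_rpow_const x p ?_
    rcases eq_or_ne x 0 with h | h
    · exact Or.inr hp.le
    · exact Or.inl h
  exact h.comp (by fun_prop)

lemma hasDerivAt_lower (α β : ℝ) (hα : -1 < α) (n : ℕ) {t : ℝ} (h1 : -1 < t) (h2 : t < 1) :
    HasDerivAt (fun s => (1-s)^(α+1) * ((1+s)^(β+1) * jacobiP (α+1) (β+1) n s))
      (-(2*((n:ℝ)+1)) * ((1-t)^α * ((1+t)^β * jacobiP α β (n+1) t))) t := by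
  have h1t : (0:ℝ) < 1 - t := by linarith
  have h2t : (0:ℝ) < 1 + t := by linarith
  have hone : HasDerivAt (fun s : ℝ => 1 - s) (-1) t := by
    simpa using (hasDerivAt_id t).const_sub 1
  have htwo : HasDerivAt (fun s : ℝ => 1 + s) 1 t := by
    simpa using (hasDerivAt_id t).const_add 1
  have hA : HasDerivAt (fun s : ℝ => (1-s)^(α+1)) (-((α+1) * (1-t)^α)) t := by
    have := (Real.hasDerivAt_rpow_const (x := 1-t) (p := α+1) (Or.inl h1t.ne')).comp t hone
    refine this.congr_deriv ?_
    rw [show α+1-1 = α from by ring]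
    ring
  have hB : HasDerivAt (fun s : ℝ => (1+s)^(β+1)) ((β+1) * (1+t)^β) t := by
    have := (Real.hasDerivAt_rpow_const (x := 1+t) (p := β+1) (Or.inl h2t.ne')).comp t htwo
    refine this.congr_deriv ?_
    rw [show β+1-1 = β from by ring]
    ring
  have hP := hasDerivAt_jacobiP (α+1) (β+1) n t
  have hprod := hA.mul (hB.mul hP)
  refine hprod.congr_deriv ?_
  simp only [Pi.mul_apply]
  rw [Real.rpow_add_one h1t.ne' α, Real.rpow_add_one h2t.ne' β]
  have halg := jacobi_alg α β hα n t
  rw [show -(2*((n:ℝ)+1)) * ((1-t)^α * ((1+t)^β * jacobiP α β (n+1) t))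
      = ((1-t)^α * (1+t)^β) * (-(2*((n:ℝ)+1)) * jacobiP α β (n+1) t) from by ring, ← halg]
  ring

lemma step_eq (α β : ℝ) (hα : -1 < α) (hβ : -1 < β) (n : ℕ) :
    ∫ t in (-1:ℝ)..1, t^(n+1) * (1-t)^α * (1+t)^β * jacobiP α β (n+1) t
      = 1/2 * ∫ t in (-1:ℝ)..1, t^n * (1-t)^(α+1) * (1+t)^(β+1) * jacobiP (α+1) (β+1) n t := by
  set g : ℝ → ℝ := fun s => (1-s)^(α+1) * ((1+s)^(β+1) * jacobiP (α+1) (β+1) n s) with hg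
  set F : ℝ → ℝ := fun s => s^(n+1) * g s with hF
  set A : ℝ → ℝ := fun s => ((n:ℝ)+1) * s^n * g s with hA
  set B : ℝ → ℝ := fun s =>
    s^(n+1) * (-(2*((n:ℝ)+1)) * ((1-s)^α * ((1+s)^β * jacobiP α β (n+1) s))) with hB
  have hgc : Continuous g := by
    exact ((continuous_rpow_shift 1 (by linarith : (0:ℝ) < α+1) (-1)).congr (by intro x; congr 1; ring)).mul
      (((continuous_rpow_shift 1 (by linarith : (0:ℝ) < β+1) 1).congr (by intro x; congr 1; ring)).mul
        (continuous_jacobiP (α+1) (β+1) n))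
  have hAc : Continuous A := by fun_prop
  have hAint : IntervalIntegrable A volume (-1) 1 := hAc.intervalIntegrable _ _
  have hBint : IntervalIntegrable B volume (-1) 1 := by
    have heq : B = fun s => (1-s)^α * (1+s)^β *
        (s^(n+1) * (-(2*((n:ℝ)+1))) * jacobiP α β (n+1) s) := by
      funext s; simp only [hB]; ring
    rw [heq]
    exact intervalIntegrable_weight_mul hα hβ
      (((continuous_pow (n+1)).mul continuous_const).mul (continuous_jacobiP α β (n+1)))
  have hderiv : ∀ s ∈ Ioo (-1:ℝ) 1, HasDerivAt F (A s + B s) s := by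
    intro s hs
    have hpow : HasDerivAt (fun s : ℝ => s^(n+1)) (((n:ℝ)+1) * s^n) s := by
      have := hasDerivAt_pow (n+1) s
      simpa using this
    exact hpow.mul (hasDerivAt_lower α β hα n hs.1 hs.2)
  have hFc : ContinuousOn F (Icc (-1:ℝ) 1) := by
    exact ((continuous_pow (n+1)).mul hgc).continuousOn
  have hftc := integral_eq_sub_of_hasDerivAt_of_le (by norm_num : (-1:ℝ) ≤ 1) hFc hderiv
    (hAint.add hBint)
  have hF1 : F 1 = 0 := by
    simp only [hF, hg]
    norm_num [Real.zero_rpow (show α+1 ≠ 0 by linarith)]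
  have hFm1 : F (-1) = 0 := by
    simp only [hF, hg]
    norm_num [Real.zero_rpow (show β+1 ≠ 0 by linarith)]
  rw [intervalIntegral.integral_add hAint hBint, hF1, hFm1] at hftc
  have hIA : ∫ s in (-1:ℝ)..1, A s
      = ((n:ℝ)+1) * ∫ t in (-1:ℝ)..1, t^n * (1-t)^(α+1) * (1+t)^(β+1) * jacobiP (α+1) (β+1) n t := by
    rw [← intervalIntegral.integral_const_mul]
    refine intervalIntegral.integral_congr fun s _ => ?_
    simp only [hA, hg]; ring
  have hIB : ∫ s in (-1:ℝ)..1, B s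
      = -(2*((n:ℝ)+1)) * ∫ t in (-1:ℝ)..1, t^(n+1) * (1-t)^α * (1+t)^β * jacobiP α β (n+1) t := by
    rw [← intervalIntegral.integral_const_mul]
    refine intervalIntegral.integral_congr fun s _ => ?_
    simp only [hB]; ring
  rw [hIA, hIB] at hftc
  have hn1 : ((n:ℝ)+1) ≠ 0 := by positivity
  have := hftc
  field_simp at this ⊢
  nlinarith [this]

lemma jacobiP_zero_eq (α β : ℝ) (t : ℝ) : jacobiP α β 0 t = 1 := by
  simp [jacobiP_eq, jc_zero, poch_zero]

lemma main_aux (n : ℕ) : ∀ α β : ℝ, -1 < α → -1 < β →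
    (∫ t in (-1:ℝ)..1, t ^ n * (1 - t) ^ α * (1 + t) ^ β * jacobiP α β n t)
      = betaR (α + n + 1) (β + n + 1) * 2 ^ (α + β + (n:ℝ) + 1) := by
  induction n with
  | zero =>
      intro α β hα hβ
      have : (∫ t in (-1:ℝ)..1, t ^ 0 * (1 - t) ^ α * (1 + t) ^ β * jacobiP α β 0 t)
          = ∫ t in (-1:ℝ)..1, (1-t) ^ α * (1+t) ^ β := by
        refine intervalIntegral.integral_congr fun t _ => ?_
        rw [jacobiP_zero_eq]; ring
      rw [this, integral_weight hα hβ, betaR_comm]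
      norm_num [mul_comm]
  | succ n ih =>
      intro α β hα hβ
      rw [step_eq α β hα hβ n, ih (α+1) (β+1) (by linarith) (by linarith)]
      rw [show (α+1) + (n:ℝ) + 1 = α + ((n:ℕ)+1:ℕ) + 1 from by push_cast; ring,
          show (β+1) + (n:ℝ) + 1 = β + ((n:ℕ)+1:ℕ) + 1 from by push_cast; ring,
          show (α+1) + (β+1) + (n:ℝ) + 1 = (α + β + (((n:ℕ)+1:ℕ):ℝ) + 1) + 1 from by push_cast; ring,
          Real.rpow_add_one (by norm_num : (2:ℝ) ≠ 0)]
      ring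

end Anal

/-- The moment of order `n` against `P_n^{(α,β)}`. -/
theorem integral_jacobi_monomial_eq (α β : ℝ) (n : ℕ) (hα : -1 < α) (hβ : -1 < β) :
    ∫ t in (-1 : ℝ)..1, t ^ n * (1 - t) ^ α * (1 + t) ^ β * jacobiP α β n t =
      betaR (α + n + 1) (β + n + 1) * 2 ^ (α + β + (n : ℝ) + 1) := by
  exact main_aux n α β hα hβ
end

section
/- For a complex number a₀+M+1 where M is a non-negative integer, and parameters a₀,…,a_p, b₂,…,b_p with no b_i a non-positive integer exceeding -M-1 in the relevant sense: the regularized hypergeometric value (1/Γ(-M)) · _{p+1}F_p(a₀,…,a_p; -M, b₂,…,b_p; z) equals z^{M+1} (a₀)_{M+1}⋯(a_p)_{M+1} / (Γ(M+2) (b₂)_{M+1}⋯(b_p)_{M+1}) · _{p+1}F_p(a₀+M+1,…,a_p+M+1; M+2, b₂+M+1,…,b_p+M+1; z), where the left side is defined as the limit of (1/Γ(c)) _{p+1}F_p with lower parameter c → -M. -/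
open scoped Real Topology
open Filter

lemma pochC_zero (x : ℂ) : pochC x 0 = 1 := by simp [pochC]

lemma pochC_succ (x : ℂ) (n : ℕ) : pochC x (n+1) = pochC x n * (x + n) := by
  simp [pochC, Finset.prod_range_succ]

lemma pochC_add' (x : ℂ) (m n : ℕ) :
    pochC x (m + n) = pochC x m * pochC (x + m) n := by
  rw [pochC, pochC, pochC, Finset.prod_range_add]
  congr 1
  refine Finset.prod_congr rfl fun i _ => ?_
  push_cast; ring

lemma pochC_ne_zero {x : ℂ} (h : ∀ i : ℕ, x + i ≠ 0) (n : ℕ) : pochC x n ≠ 0 :=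
  Finset.prod_ne_zero_iff.mpr fun i _ => h i

lemma Gamma_add_nat (c : ℂ) (k : ℕ) (h : ∀ i : ℕ, i < k → c + i ≠ 0) :
    Complex.Gamma (c + k) = Complex.Gamma c * pochC c k := by
  induction k with
  | zero => simp [pochC]
  | succ n ih =>
    have h1 : c + ((n+1 : ℕ) : ℂ) = (c + n) + 1 := by push_cast; ring
    rw [h1, Complex.Gamma_add_one _ (h n (Nat.lt_succ_self n)),
      ih (fun i hi => h i (hi.trans (Nat.lt_succ_self n))), pochC_succ]
    ring

lemma tendsto_ratio_aux (A B : ℝ) :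
    Tendsto (fun k : ℕ => (A + k) / (B + k)) atTop (𝓝 1) := by
  have hB : Tendsto (fun k : ℕ => B + (k:ℝ)) atTop atTop :=
    tendsto_atTop_add_const_left _ _ tendsto_natCast_atTop_atTop
  have h0 : Tendsto (fun k : ℕ => (A - B) / (B + k)) atTop (𝓝 0) :=
    Tendsto.div_atTop tendsto_const_nhds hB
  have h1 : Tendsto (fun k : ℕ => 1 + (A - B) / (B + k)) atTop (𝓝 1) := by
    simpa using h0.const_add 1
  refine h1.congr' ?_
  filter_upwards [hB.eventually_gt_atTop 0] with k hk
  field_simp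
  ring

lemma norm_pochC_ge_factorial {w : ℂ} (hw : 1 ≤ w.re) (n : ℕ) :
    (n.factorial : ℝ) ≤ ‖pochC w n‖ := by
  induction n with
  | zero => simp [pochC]
  | succ m ih =>
    rw [pochC_succ, norm_mul]
    have h1 : ((m:ℝ) + 1) ≤ ‖w + m‖ := by
      calc ((m:ℝ) + 1) ≤ (w + m).re := by simp [Complex.add_re]; linarith
        _ ≤ ‖w + m‖ := Complex.re_le_norm _
    calc ((m+1).factorial : ℝ) = (m.factorial : ℝ) * (m + 1) := by
          push_cast [Nat.factorial_succ]; ring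
      _ ≤ ‖pochC w m‖ * ‖w + m‖ :=
          mul_le_mul ih h1 (by positivity) (norm_nonneg _)
lemma gamma_inv_bound (M : ℕ) :
    ∃ C : ℝ, 0 < C ∧ ∀ c ∈ Metric.closedBall (-(M:ℂ)) (1/2), ∀ k : ℕ,
      ‖(Complex.Gamma (c + k))⁻¹‖ ≤ C / (k - (M+2)).factorial := by
  obtain ⟨x₁, -, hx₁⟩ := (isCompact_closedBall (0:ℂ) (2*M+3)).exists_isMaxOn
    ⟨0, by simp; positivity⟩
    (Complex.differentiable_one_div_Gamma.continuous.norm.continuousOn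
      (s := Metric.closedBall 0 (2*M+3)))
  obtain ⟨x₀, hx₀mem, hx₀⟩ := (isCompact_closedBall (2:ℂ) (1/2)).exists_isMinOn
    ⟨2, by simp⟩
    (ContinuousOn.norm (fun w hw => by
      have hre : (3:ℝ)/2 ≤ w.re := by
        have := Complex.abs_re_le_norm (w - 2)
        simp only [Metric.mem_closedBall, Complex.dist_eq] at hw
        have : |w.re - 2| ≤ 1/2 := by
          simpa [Complex.sub_re] using le_trans (Complex.abs_re_le_norm (w-2)) hw
        cases abs_le.mp this; linarith
      exact (Complex.differentiableAt_Gamma w (fun m => by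
        intro hc
        have : w.re = -(m:ℝ) := by rw [hc]; simp
        have : (0:ℝ) ≤ (m:ℝ) := by positivity
        linarith)).continuousAt.continuousWithinAt))
  have hδ : 0 < ‖Complex.Gamma x₀‖ := by
    refine norm_pos_iff.mpr (Complex.Gamma_ne_zero fun m hc => ?_)
    have hre : (3:ℝ)/2 ≤ x₀.re := by
      simp only [Metric.mem_closedBall, Complex.dist_eq] at hx₀mem
      have : |x₀.re - 2| ≤ 1/2 := by
        simpa [Complex.sub_re] using le_trans (Complex.abs_re_le_norm (x₀-2)) hx₀mem
      cases abs_le.mp this; linarith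
    have : x₀.re = -(m:ℝ) := by rw [hc]; simp
    have : (0:ℝ) ≤ (m:ℝ) := by positivity
    linarith
  set δ := ‖Complex.Gamma x₀‖ with hδdef
  set C₁ := ‖(Complex.Gamma x₁)⁻¹‖ with hC₁def
  refine ⟨max C₁ δ⁻¹ + 1, by positivity, fun c hc k => ?_⟩
  simp only [Metric.mem_closedBall, Complex.dist_eq] at hc
  have hcM : ‖c + M‖ ≤ 1/2 := by
    have : c - (-(M:ℂ)) = c + M := by ring
    rw [← this]; exact hc
  have hcre : -(M:ℝ) - 1/2 ≤ c.re := by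
    have h1 : |(c + M).re| ≤ 1/2 := le_trans (Complex.abs_re_le_norm _) hcM
    have : |c.re + M| ≤ 1/2 := by simpa [Complex.add_re] using h1
    cases abs_le.mp this; linarith
  rcases le_or_gt k (M+1) with hk | hk
  · -- small k
    have hmem : c + (k:ℂ) ∈ Metric.closedBall (0:ℂ) (2*M+3) := by
      simp only [Metric.mem_closedBall, Complex.dist_eq, sub_zero]
      calc ‖c + (k:ℂ)‖ ≤ ‖c + M‖ + ‖(k:ℂ) - M‖ := by
            have : c + (k:ℂ) = (c + M) + ((k:ℂ) - M) := by ring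
            rw [this]; exact norm_add_le _ _
        _ ≤ 1/2 + (k + M) := by
            refine add_le_add hcM ?_
            calc ‖(k:ℂ) - (M:ℂ)‖ ≤ ‖(k:ℂ)‖ + ‖(M:ℂ)‖ := norm_sub_le _ _
              _ = k + M := by simp [Complex.norm_natCast]
        _ ≤ 2*M + 3 := by
            have : (k:ℝ) ≤ M + 1 := by exact_mod_cast hk
            linarith
    have h0 : k - (M + 2) = 0 := Nat.sub_eq_zero_of_le (by omega)
    rw [h0]
    simp only [Nat.factorial_zero, Nat.cast_one, div_one]
    calc ‖(Complex.Gamma (c + k))⁻¹‖ ≤ C₁ := hx₁ hmem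
      _ ≤ max C₁ δ⁻¹ + 1 := by
        have := le_max_left C₁ δ⁻¹; linarith
  · -- large k
    set n := k - (M + 2) with hn
    have hkn : k = (M + 2) + n := by omega
    have hw : c + (k:ℂ) = (c + ((M:ℂ)+2)) + (n:ℂ) := by
      rw [hkn]; push_cast; ring
    set w := c + ((M:ℂ)+2) with hwdef
    have hwre : (3:ℝ)/2 ≤ w.re := by
      have h2 : w.re = c.re + ((M:ℝ) + 2) := by
        simp [hwdef, Complex.add_re, Complex.natCast_re]
      rw [h2]; linarith
    have hwne : ∀ i : ℕ, i < n → w + i ≠ 0 := fun i _ hc0 => by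
      have : (w + i).re = 0 := by rw [hc0]; simp
      have : w.re + i = 0 := by simpa [Complex.add_re] using this
      have : (0:ℝ) ≤ (i:ℝ) := by positivity
      linarith
    have hG : Complex.Gamma (c + k) = Complex.Gamma w * pochC w n := by
      rw [hw]; exact Gamma_add_nat w n hwne
    have hwmem : w ∈ Metric.closedBall (2:ℂ) (1/2) := by
      simp only [Metric.mem_closedBall, Complex.dist_eq]
      have : w - 2 = c + M := by rw [hwdef]; push_cast; ring
      rw [this]; exact hcM
    have hδw : δ ≤ ‖Complex.Gamma w‖ := hx₀ hwmem
    have hpoch : (n.factorial : ℝ) ≤ ‖pochC w n‖ :=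
      norm_pochC_ge_factorial (by linarith) n
    have hfac : (0:ℝ) < n.factorial := by positivity
    have hnorm : δ * n.factorial ≤ ‖Complex.Gamma (c + k)‖ := by
      rw [hG, norm_mul]
      exact mul_le_mul hδw hpoch (by positivity) (norm_nonneg _)
    rw [norm_inv]
    have hpos : (0:ℝ) < δ * n.factorial := by positivity
    calc ‖Complex.Gamma (c + k)‖⁻¹ ≤ (δ * n.factorial)⁻¹ := by
          exact inv_anti₀ hpos hnorm
      _ = δ⁻¹ / n.factorial := by rw [mul_inv]; ring
      _ ≤ (max C₁ δ⁻¹ + 1) / n.factorial := by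
          have h1 : δ⁻¹ ≤ max C₁ δ⁻¹ + 1 := by
            have := le_max_right C₁ δ⁻¹; linarith
          gcongr
      _ = (max C₁ δ⁻¹ + 1) / (k - (M+2)).factorial := rfl
set_option maxHeartbeats 1000000 in
lemma v_summable (M : ℕ) (a₀ a₁ a₂ b₂ : ℂ) (z : ℂ) (hz : ‖z‖ < 1)
    (hb : ∀ j : ℕ, b₂ + (j : ℂ) ≠ 0) :
    Summable (fun k : ℕ => ‖pochC a₀ k‖ * ‖pochC a₁ k‖ * ‖pochC a₂ k‖ /
      (‖pochC b₂ k‖ * k.factorial * (k - (M+2)).factorial) * ‖z‖ ^ k) := by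
  set v := fun k : ℕ => ‖pochC a₀ k‖ * ‖pochC a₁ k‖ * ‖pochC a₂ k‖ /
      (‖pochC b₂ k‖ * k.factorial * (k - (M+2)).factorial) * ‖z‖ ^ k with hv
  have hvnonneg : ∀ k, 0 ≤ v k := fun k => by
    have := (norm_nonneg z); positivity
  set r := (1 + ‖z‖) / 2 with hrdef
  have hr1 : r < 1 := by rw [hrdef]; linarith
  have hzr : ‖z‖ < r := by rw [hrdef]; linarith
  apply summable_of_ratio_norm_eventually_le hr1
  have hQ : Tendsto (fun k : ℕ => ‖z‖ * ((‖a₀‖ + k) / (-‖b₂‖ + k)) *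
      ((‖a₁‖ + k) / (1 + k)) * ((‖a₂‖ + k) / (-((M:ℝ)+1) + k))) atTop
      (𝓝 (‖z‖ * 1 * 1 * 1)) :=
    ((tendsto_const_nhds.mul (tendsto_ratio_aux _ _)).mul (tendsto_ratio_aux _ _)).mul
      (tendsto_ratio_aux _ _)
  have hQ' : ∀ᶠ k : ℕ in atTop, ‖z‖ * ((‖a₀‖ + k) / (-‖b₂‖ + k)) *
      ((‖a₁‖ + k) / (1 + k)) * ((‖a₂‖ + k) / (-((M:ℝ)+1) + k)) < r := by
    apply hQ.eventually_lt_const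
    simpa using hzr
  filter_upwards [hQ', eventually_ge_atTop (M+2),
    (tendsto_natCast_atTop_atTop (R := ℝ)).eventually_gt_atTop ‖b₂‖] with k hQk hk2 hkb
  have hb' : (0:ℝ) < (k:ℝ) - ‖b₂‖ := by linarith
  have hbnorm : (k:ℝ) - ‖b₂‖ ≤ ‖b₂ + k‖ := by
    calc (k:ℝ) - ‖b₂‖ ≤ ‖(k:ℂ)‖ - ‖b₂‖ := by simp [Complex.norm_natCast]
      _ ≤ ‖b₂ + k‖ := by
        have h := norm_sub_le (b₂ + (k:ℂ)) b₂
        have hkc : ‖b₂ + (k:ℂ) - b₂‖ = ‖(k:ℂ)‖ := by ring_nf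
        rw [hkc] at h
        simp only [Complex.norm_natCast] at h
        have := norm_nonneg b₂
        have hknorm : ‖(k:ℂ)‖ = (k:ℝ) := Complex.norm_natCast k
        linarith
  -- now prove ‖v (k+1)‖ ≤ r * ‖v k‖
  have hfac1 : (0:ℝ) < (k.factorial : ℝ) := by positivity
  have hfac2 : (0:ℝ) < ((k - (M+2)).factorial : ℝ) := by positivity
  have hpb : ‖pochC b₂ k‖ ≠ 0 := norm_ne_zero_iff.mpr (pochC_ne_zero hb k)
  have hpbpos : (0:ℝ) < ‖pochC b₂ k‖ := lt_of_le_of_ne (norm_nonneg _) (Ne.symm hpb)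
  have hbk : (0:ℝ) < ‖b₂ + k‖ := by linarith
  have hk1 : (0:ℝ) < (k:ℝ) + 1 := by positivity
  have hkM : (0:ℝ) < (k:ℝ) - ((M:ℝ) + 1) := by
    have : ((M:ℝ) + 2) ≤ (k:ℝ) := by exact_mod_cast hk2
    linarith
  -- step equation
  have hsub : k + 1 - (M + 2) = (k - (M + 2)) + 1 := by omega
  have hcast : (((k - (M+2)) + 1 : ℕ) : ℝ) = (k:ℝ) - ((M:ℝ) + 1) := by
    push_cast [Nat.cast_sub hk2]; ring
  have hstep : v (k + 1) = v k *
      (‖z‖ * ‖a₀ + (k:ℂ)‖ * ‖a₁ + (k:ℂ)‖ * ‖a₂ + (k:ℂ)‖ /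
        (‖b₂ + (k:ℂ)‖ * ((k:ℝ) + 1) * ((k:ℝ) - ((M:ℝ) + 1)))) := by
    simp only [hv]
    rw [pochC_succ a₀ k, pochC_succ a₁ k, pochC_succ a₂ k, pochC_succ b₂ k,
      Nat.factorial_succ, hsub, Nat.factorial_succ ((k - (M+2)))]
    push_cast [Nat.cast_sub hk2]
    simp only [norm_mul]
    rw [pow_succ]
    have e1 : ‖pochC b₂ k‖ ≠ 0 := norm_ne_zero_iff.mpr (pochC_ne_zero hb k)
    have e2 : ‖b₂ + (k:ℂ)‖ ≠ 0 := by
      have := hb k; exact norm_ne_zero_iff.mpr this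
    have e3 : (k.factorial : ℝ) ≠ 0 := by positivity
    have e4 : ((k - (M+2)).factorial : ℝ) ≠ 0 := by positivity
    have e5 : ((k:ℝ) + 1) ≠ 0 := by positivity
    have e6 : ((k:ℝ) - ((M:ℝ) + 1)) ≠ 0 := by
      have : ((M:ℝ) + 2) ≤ (k:ℝ) := by exact_mod_cast hk2
      intro h; nlinarith
    field_simp
    have e7 : (-1 + (k:ℝ) - M) ≠ 0 := by intro h; apply e6; linarith
    ring_nf
    field_simp
    ring
  -- bound the bracket
  have hna : ∀ a : ℂ, ‖a + (k:ℂ)‖ ≤ ‖a‖ + (k:ℝ) := fun a => by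
    calc ‖a + (k:ℂ)‖ ≤ ‖a‖ + ‖(k:ℂ)‖ := norm_add_le _ _
      _ = ‖a‖ + (k:ℝ) := by simp [Complex.norm_natCast]
  have hbr : ‖z‖ * ‖a₀ + (k:ℂ)‖ * ‖a₁ + (k:ℂ)‖ * ‖a₂ + (k:ℂ)‖ /
        (‖b₂ + (k:ℂ)‖ * ((k:ℝ) + 1) * ((k:ℝ) - ((M:ℝ) + 1))) ≤
      ‖z‖ * ((‖a₀‖ + k) / (-‖b₂‖ + k)) *
        ((‖a₁‖ + k) / (1 + k)) * ((‖a₂‖ + k) / (-((M:ℝ)+1) + k)) := by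
    have hRHSeq : ‖z‖ * ((‖a₀‖ + k) / (-‖b₂‖ + k)) *
        ((‖a₁‖ + k) / (1 + k)) * ((‖a₂‖ + k) / (-((M:ℝ)+1) + k)) =
        ‖z‖ * (‖a₀‖ + k) * (‖a₁‖ + k) * (‖a₂‖ + k) /
          (((k:ℝ) - ‖b₂‖) * ((k:ℝ) + 1) * ((k:ℝ) - ((M:ℝ) + 1))) := by
      have h1 : -‖b₂‖ + (k:ℝ) ≠ 0 := by linarith
      have h2 : (1:ℝ) + (k:ℝ) ≠ 0 := by linarith
      have h3 : -((M:ℝ)+1) + (k:ℝ) ≠ 0 := by linarith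
      field_simp
      ring
    rw [hRHSeq]
    have g0 := hna a₀
    have g1 := hna a₁
    have g2 := hna a₂
    gcongr <;> first | positivity | linarith
  have hbrlt : ‖z‖ * ‖a₀ + (k:ℂ)‖ * ‖a₁ + (k:ℂ)‖ * ‖a₂ + (k:ℂ)‖ /
        (‖b₂ + (k:ℂ)‖ * ((k:ℝ) + 1) * ((k:ℝ) - ((M:ℝ) + 1))) ≤ r :=
    le_of_lt (lt_of_le_of_lt hbr hQk)
  have : v (k+1) ≤ r * v k := by
    rw [hstep, mul_comm r (v k)]
    exact mul_le_mul_of_nonneg_left hbrlt (hvnonneg k)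
  calc ‖v (k+1)‖ = v (k+1) := Real.norm_of_nonneg (hvnonneg _)
    _ ≤ r * v k := this
    _ = r * ‖v k‖ := by rw [Real.norm_of_nonneg (hvnonneg _)]
lemma factorial_pochC (M n : ℕ) :
    (((M + 1 + n).factorial : ℂ)) = ((M+1).factorial : ℂ) * pochC ((M:ℂ) + 2) n := by
  induction n with
  | zero => simp [pochC]
  | succ m ih =>
    have h1 : M + 1 + (m + 1) = (M + 1 + m) + 1 := by omega
    rw [h1, Nat.factorial_succ, pochC_succ]
    push_cast
    rw [ih]
    push_cast
    ring

set_option maxHeartbeats 1000000 in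
/-- Regularized `₃F₂` with lower parameter a non-positive integer `-M` (the `p = 2` case). -/
theorem regularized_hyp3F2_neg_int (M : ℕ) (a₀ a₁ a₂ b₂ : ℂ) (z : ℂ)
    (hz : ‖z‖ < 1) (hb : ∀ j : ℕ, b₂ + (j : ℂ) ≠ 0) :
    Filter.Tendsto
      (fun c : ℂ => (Complex.Gamma c)⁻¹ *
        ∑' k : ℕ, pochC a₀ k * pochC a₁ k * pochC a₂ k /
          (pochC c k * pochC b₂ k * k.factorial) * z ^ k)
      (𝓝[{c : ℂ | ∀ j : ℤ, c ≠ (j : ℂ)}] (-(M : ℂ)))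
      (𝓝 (z ^ (M + 1) * pochC a₀ (M + 1) * pochC a₁ (M + 1) * pochC a₂ (M + 1) /
          (Complex.Gamma ((M : ℂ) + 2) * pochC b₂ (M + 1)) *
        ∑' k : ℕ, pochC (a₀ + M + 1) k * pochC (a₁ + M + 1) k * pochC (a₂ + M + 1) k /
          (pochC ((M : ℂ) + 2) k * pochC (b₂ + M + 1) k * k.factorial) * z ^ k)) := by
  obtain ⟨C, hC, hCb⟩ := gamma_inv_bound M
  set s : Set ℂ := Metric.closedBall (-(M:ℂ)) (1/2) with hsdef
  set g : ℕ → ℂ → ℂ := fun k c =>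
    pochC a₀ k * pochC a₁ k * pochC a₂ k / (pochC b₂ k * k.factorial) *
      (Complex.Gamma (c + k))⁻¹ * z ^ k with hgdef
  set F : ℂ → ℂ := fun c => ∑' k, g k c with hFdef
  set u : ℕ → ℝ := fun k => C * (‖pochC a₀ k‖ * ‖pochC a₁ k‖ * ‖pochC a₂ k‖ /
      (‖pochC b₂ k‖ * k.factorial * (k - (M+2)).factorial) * ‖z‖ ^ k) with hudef
  have hu : Summable u := (v_summable M a₀ a₁ a₂ b₂ z hz hb).mul_left C
  -- the uniform bound
  have hbound : ∀ k : ℕ, ∀ c ∈ s, ‖g k c‖ ≤ u k := by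
    intro k c hc
    have hAk : ‖pochC a₀ k * pochC a₁ k * pochC a₂ k / (pochC b₂ k * k.factorial)‖ =
        ‖pochC a₀ k‖ * ‖pochC a₁ k‖ * ‖pochC a₂ k‖ / (‖pochC b₂ k‖ * k.factorial) := by
      simp [norm_div, norm_mul, Complex.norm_natCast]
    calc ‖g k c‖ = ‖pochC a₀ k * pochC a₁ k * pochC a₂ k / (pochC b₂ k * k.factorial)‖ *
          ‖(Complex.Gamma (c + k))⁻¹‖ * ‖z‖ ^ k := by
          simp [hgdef, norm_mul, norm_pow]
      _ ≤ ‖pochC a₀ k * pochC a₁ k * pochC a₂ k / (pochC b₂ k * k.factorial)‖ *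
          (C / (k - (M+2)).factorial) * ‖z‖ ^ k := by
          gcongr
          exact hCb c hc k
      _ = u k := by rw [hAk, hudef]; ring
  -- continuity
  have hcontg : ∀ k : ℕ, Continuous (g k) := fun k => by
    apply Continuous.mul ?_ continuous_const
    apply Continuous.mul continuous_const
    exact Complex.differentiable_one_div_Gamma.continuous.comp
      (continuous_id.add continuous_const)
  have hcontF : ContinuousOn F s := by
    refine (tendstoUniformlyOn_tsum_nat hu hbound).continuousOn ?_
    refine Filter.Frequently.of_forall fun N => ?_
    exact (continuous_finset_sum _ (fun i _ => hcontg i)).continuousOn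
  have hFtend : Tendsto F (𝓝[{c : ℂ | ∀ j : ℤ, c ≠ (j : ℂ)}] (-(M:ℂ))) (𝓝 (F (-(M:ℂ)))) :=
    ((hcontF.continuousAt (Metric.closedBall_mem_nhds _ (by norm_num))).tendsto).mono_left
      nhdsWithin_le_nhds
  -- eventual equality
  have heq : ∀ c ∈ {c : ℂ | ∀ j : ℤ, c ≠ (j : ℂ)},
      ((Complex.Gamma c)⁻¹ *
        ∑' k : ℕ, pochC a₀ k * pochC a₁ k * pochC a₂ k /
          (pochC c k * pochC b₂ k * k.factorial) * z ^ k) = F c := by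
    intro c hcS
    have hpc : ∀ i : ℕ, c + (i:ℂ) ≠ 0 := fun i h => by
      apply hcS (-(i:ℤ))
      have := eq_neg_of_add_eq_zero_left h
      push_cast
      exact this
    have hGc : Complex.Gamma c ≠ 0 := by
      apply Complex.Gamma_ne_zero
      intro m h
      apply hcS (-(m:ℤ))
      push_cast
      exact h
    rw [hFdef]
    rw [← tsum_mul_left]
    apply tsum_congr
    intro k
    have hG : Complex.Gamma (c + k) = Complex.Gamma c * pochC c k :=
      Gamma_add_nat c k (fun i _ => hpc i)
    have h1 : pochC c k ≠ 0 := pochC_ne_zero hpc k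
    have h2 : pochC b₂ k ≠ 0 := pochC_ne_zero hb k
    have h3 : (k.factorial : ℂ) ≠ 0 := by
      exact_mod_cast Nat.factorial_ne_zero k
    simp only [hgdef]
    rw [hG]
    field_simp
  have heqEv : (fun c : ℂ => (Complex.Gamma c)⁻¹ *
        ∑' k : ℕ, pochC a₀ k * pochC a₁ k * pochC a₂ k /
          (pochC c k * pochC b₂ k * k.factorial) * z ^ k)
      =ᶠ[𝓝[{c : ℂ | ∀ j : ℤ, c ≠ (j : ℂ)}] (-(M:ℂ))] F :=
    eventually_nhdsWithin_of_forall heq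
  -- the limit value
  have hval : F (-(M:ℂ)) =
      z ^ (M + 1) * pochC a₀ (M + 1) * pochC a₁ (M + 1) * pochC a₂ (M + 1) /
          (Complex.Gamma ((M : ℂ) + 2) * pochC b₂ (M + 1)) *
        ∑' k : ℕ, pochC (a₀ + M + 1) k * pochC (a₁ + M + 1) k * pochC (a₂ + M + 1) k /
          (pochC ((M : ℂ) + 2) k * pochC (b₂ + M + 1) k * k.factorial) * z ^ k := by
    have hsum : Summable (fun k => g k (-(M:ℂ))) := by
      apply Summable.of_norm_bounded hu
      intro k
      exact hbound k _ (Metric.mem_closedBall_self (by norm_num))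
    have hzero : ∀ i ∈ Finset.range (M+1), g i (-(M:ℂ)) = 0 := by
      intro i hi
      have hi' : i ≤ M := by
        have := Finset.mem_range.mp hi; omega
      have harg : -(M:ℂ) + (i:ℂ) = -(((M - i : ℕ)):ℂ) := by
        push_cast [Nat.cast_sub hi']
        ring
      simp only [hgdef]
      rw [harg, Complex.Gamma_neg_nat_eq_zero, inv_zero, mul_zero, zero_mul]
    have hterm : ∀ n : ℕ, g (n + (M+1)) (-(M:ℂ)) =
        (z ^ (M + 1) * pochC a₀ (M + 1) * pochC a₁ (M + 1) * pochC a₂ (M + 1) /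
          (Complex.Gamma ((M : ℂ) + 2) * pochC b₂ (M + 1))) *
        (pochC (a₀ + M + 1) n * pochC (a₁ + M + 1) n * pochC (a₂ + M + 1) n /
          (pochC ((M : ℂ) + 2) n * pochC (b₂ + M + 1) n * n.factorial) * z ^ n) := by
      intro n
      have hidx : n + (M+1) = (M+1) + n := by omega
      have hpa : ∀ x : ℂ, pochC x ((M+1) + n) = pochC x (M+1) * pochC (x + (M:ℂ) + 1) n := by
        intro x
        rw [pochC_add']
        congr 2
        push_cast; ring
      have hfact : (((M+1) + n).factorial : ℂ) = ((M+1).factorial : ℂ) * pochC ((M:ℂ)+2) n :=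
        factorial_pochC M n
      have hGamma : Complex.Gamma (-(M:ℂ) + (((M+1) + n : ℕ) : ℂ)) = (n.factorial : ℂ) := by
        have h9 : -(M:ℂ) + (((M+1) + n : ℕ) : ℂ) = (n:ℂ) + 1 := by push_cast; ring
        rw [h9, Complex.Gamma_nat_eq_factorial]
      have hGamma2 : Complex.Gamma ((M:ℂ) + 2) = ((M+1).factorial : ℂ) := by
        have h9 : (M:ℂ) + 2 = ((M+1 : ℕ):ℂ) + 1 := by push_cast; ring
        rw [h9, Complex.Gamma_nat_eq_factorial]
      have h2 : pochC b₂ (M+1) ≠ 0 := pochC_ne_zero hb (M+1)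
      have h2' : pochC (b₂ + (M:ℂ) + 1) n ≠ 0 := by
        apply pochC_ne_zero
        intro i h0
        apply hb (M + 1 + i)
        push_cast
        linear_combination h0
      have h3 : pochC ((M:ℂ)+2) n ≠ 0 := by
        apply pochC_ne_zero
        intro i
        have h9 : ((M:ℂ)+2) + i = ((M + 2 + i : ℕ) : ℂ) := by push_cast; ring
        rw [h9]
        exact Nat.cast_ne_zero.mpr (by omega)
      have h4 : ((M+1).factorial : ℂ) ≠ 0 := by exact_mod_cast Nat.factorial_ne_zero _
      have h5 : (n.factorial : ℂ) ≠ 0 := by exact_mod_cast Nat.factorial_ne_zero _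
      simp only [hgdef]
      rw [hidx, hpa a₀, hpa a₁, hpa a₂, hpa b₂, hfact, hGamma, hGamma2, pow_add]
      field_simp
    calc F (-(M:ℂ)) = (∑ i ∈ Finset.range (M+1), g i (-(M:ℂ))) +
          ∑' n, g (n + (M+1)) (-(M:ℂ)) := (Summable.sum_add_tsum_nat_add (M+1) hsum).symm
      _ = ∑' n, g (n + (M+1)) (-(M:ℂ)) := by rw [Finset.sum_eq_zero hzero, zero_add]
      _ = _ := by rw [tsum_congr hterm, tsum_mul_left]
  rw [← hval]
  exact Tendsto.congr' heqEv.symm hFtend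
end

section
/- For complex a, b with b not a non-positive integer: ₂F₁(a, 1-a; b; 1/2) = 2^{1-b} √π · Γ(b) / (Γ((a+b)/2) Γ((1+b-a)/2)). -/
open scoped Real Topology
open Filter

namespace BA

lemma pochC_zero (x : ℂ) : pochC x 0 = 1 := by simp [pochC]

lemma pochC_succ (x : ℂ) (n : ℕ) : pochC x (n + 1) = pochC x n * (x + n) :=
  Finset.prod_range_succ _ _

lemma pochC_ne_zero {x : ℂ} (hx : ∀ j : ℕ, x + (j : ℂ) ≠ 0) (n : ℕ) : pochC x n ≠ 0 :=
  Finset.prod_ne_zero_iff.2 fun i _ => hx i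

lemma pochC_add_two (x : ℂ) (k : ℕ) :
    pochC x k * ((x + k) * (x + k + 1)) = x * (x + 1) * pochC (x + 2) k := by
  induction k with
  | zero => simp [pochC]
  | succ k ih =>
    rw [pochC_succ, pochC_succ]
    push_cast
    have h : pochC x k * (x + ↑k) * ((x + (↑k + 1)) * (x + (↑k + 1) + 1))
        = (pochC x k * ((x + ↑k) * (x + ↑k + 1))) * (x + (↑k + 1) + 1) := by ring
    rw [h, ih]; ring

noncomputable def T (a c : ℂ) (k : ℕ) : ℂ :=
  pochC a k * pochC (1 - a) k / (pochC c k * (Nat.factorial k)) * (1 / 2 : ℂ) ^ k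

lemma T_zero (a c : ℂ) : T a c 0 = 1 := by simp [T, pochC]

lemma T_succ (a : ℂ) {c : ℂ} (hc : ∀ j : ℕ, c + (j : ℂ) ≠ 0) (k : ℕ) :
    T a c (k + 1) = (a + k) * (1 - a + k) / ((c + k) * ((k : ℂ) + 1) * 2) * T a c k := by
  have h1 : pochC c k ≠ 0 := pochC_ne_zero hc k
  have h2 : c + (k : ℂ) ≠ 0 := hc k
  have h3 : ((Nat.factorial k : ℂ)) ≠ 0 := by exact_mod_cast Nat.factorial_ne_zero k
  have h4 : ((k : ℂ) + 1) ≠ 0 := by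
    have := (Nat.cast_ne_zero (R := ℂ)).mpr (Nat.succ_ne_zero k)
    push_cast at this; exact this
  rw [T, T, pochC_succ, pochC_succ, pochC_succ, Nat.factorial_succ]
  push_cast
  field_simp
  ring


lemma norm_shift_atTop (v : ℂ) : Tendsto (fun n : ℕ => ‖v + (n : ℂ)‖) atTop atTop := by
  refine tendsto_atTop_mono' atTop (f₁ := fun n : ℕ => (n : ℝ) - ‖v‖) ?_ ?_
  · filter_upwards with n
    have : ((n : ℝ)) = ‖((n : ℂ))‖ := by
      simp
    calc (n : ℝ) - ‖v‖ = ‖(n : ℂ)‖ - ‖v‖ := by rw [← this]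
      _ ≤ ‖v + (n : ℂ)‖ := by
          have h2 : ‖(n : ℂ)‖ ≤ ‖v + (n : ℂ)‖ + ‖v‖ := by
            have h3 := norm_sub_le (v + (n : ℂ)) v
            simpa using h3
          linarith
  · exact tendsto_atTop_add_const_right _ _ tendsto_natCast_atTop_atTop

lemma inv_shift_tendsto (v : ℂ) : Tendsto (fun n : ℕ => ((v + n)⁻¹ : ℂ)) atTop (𝓝 0) := by
  rw [tendsto_zero_iff_norm_tendsto_zero]
  simpa only [norm_inv, Pi.inv_def] using (norm_shift_atTop v).inv_tendsto_atTop

lemma eventually_shift_ne (v : ℂ) : ∀ᶠ n : ℕ in atTop, v + (n : ℂ) ≠ 0 := by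
  filter_upwards [(norm_shift_atTop v).eventually_gt_atTop 0] with n hn
  exact fun h => by simp [h] at hn

lemma div_shift_tendsto (u v : ℂ) : Tendsto (fun n : ℕ => (u + n) / (v + n)) atTop (𝓝 1) := by
  have h : Tendsto (fun n : ℕ => 1 + (u - v) * (v + n)⁻¹) atTop (𝓝 1) := by
    have := (inv_shift_tendsto v).const_mul (u - v)
    have h2 := this.const_add 1
    simpa using h2
  refine h.congr' ?_
  filter_upwards [eventually_shift_ne v] with n hn
  field_simp
  ring


lemma aux_frac (x y p q : ℂ) : x / p * (y / q) * (1 / 2) = x * y / (q * p * 2) := by ring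

lemma ratio_tendsto (u₁ u₂ v : ℂ) :
    Tendsto (fun n : ℕ => (u₁ + n) * (u₂ + n) / ((v + n) * ((n : ℂ) + 1) * 2)) atTop
      (𝓝 (1 / 2)) := by
  have h := ((div_shift_tendsto u₁ 1).mul (div_shift_tendsto u₂ v)).mul
      (tendsto_const_nhds (x := (1 / 2 : ℂ)))
  simp only [mul_one, one_mul] at h
  refine Tendsto.congr ?_ h
  intro n
  rw [aux_frac, show ((1 : ℂ) + n) = ((n : ℂ) + 1) from by ring]

lemma summable_of_rec {f c : ℕ → ℂ} {L : ℂ} (hrec : ∀ n, f (n + 1) = c n * f n)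
    (hc : Tendsto c atTop (𝓝 L)) (hL : ‖L‖ < 1) : Summable f := by
  by_cases h : ∀ n, f n ≠ 0
  · refine summable_of_ratio_test_tendsto_lt_one hL (Eventually.of_forall h) ?_
    have he : ∀ n, ‖f (n + 1)‖ / ‖f n‖ = ‖c n‖ := by
      intro n
      rw [hrec n, norm_mul, mul_div_assoc, div_self (norm_ne_zero_iff.2 (h n)), mul_one]
    simpa only [he] using hc.norm
  · push_neg at h
    obtain ⟨N, hN⟩ := h
    refine summable_of_ne_finset_zero (s := Finset.range (N + 1)) fun n hn => ?_
    rw [Finset.mem_range, not_lt] at hn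
    have key : ∀ m, f (N + m) = 0 := by
      intro m
      induction m with
      | zero => simpa using hN
      | succ m ih => rw [← Nat.add_assoc, hrec, ih, mul_zero]
    have hn' : n = N + (n - N) := by omega
    rw [hn', key]

lemma norm_half_lt_one : ‖(1/2 : ℂ)‖ < 1 := by
  rw [norm_div]
  simp
  norm_num

lemma summable_T (a : ℂ) {c : ℂ} (hc : ∀ j : ℕ, c + (j : ℂ) ≠ 0) : Summable (T a c) := by
  refine summable_of_rec (c := fun k => (a + k) * (1 - a + k) / ((c + k) * ((k : ℂ) + 1) * 2))
    (fun k => T_succ a hc k) ?_ norm_half_lt_one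
  exact ratio_tendsto a (1 - a) c

/-- The sequence `D n = (a+n)(1-a+n) T a c n` tends to zero. -/
lemma D_tendsto_zero (a : ℂ) {c : ℂ} (hc : ∀ j : ℕ, c + (j : ℂ) ≠ 0) :
    Tendsto (fun n => (a + n) * (1 - a + n) * T a c n) atTop (𝓝 0) := by
  refine Summable.tendsto_atTop_zero ?_
  refine summable_of_rec
    (c := fun k => (a + (k+1)) * (1 - a + (k+1)) / ((c + k) * ((k : ℂ) + 1) * 2)) ?_ ?_
    norm_half_lt_one
  · intro n
    rw [T_succ a hc n]
    push_cast
    ring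
  · have h := ((div_shift_tendsto (a + 1) 1).mul (div_shift_tendsto (2 - a) c)).mul
        (tendsto_const_nhds (x := (1 / 2 : ℂ)))
    simp only [mul_one, one_mul] at h
    refine Tendsto.congr ?_ h
    intro n
    have e1 : a + 1 + (n : ℂ) = a + ((n : ℂ) + 1) := by ring
    have e2 : (2 : ℂ) - a + n = 1 - a + ((n : ℂ) + 1) := by ring
    have e3 : (1 : ℂ) + n = (n : ℂ) + 1 := by ring
    rw [aux_frac, e1, e2, e3]

lemma shift2 {b : ℂ} (hb : ∀ j : ℕ, b + (j : ℂ) ≠ 0) : ∀ j : ℕ, (b + 2) + (j : ℂ) ≠ 0 := by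
  intro j
  have h := hb (j + 2)
  push_cast at h
  intro hcon
  apply h
  rw [← hcon]; ring

lemma T_eq (a c : ℂ) (k : ℕ) :
    T a c k = pochC a k * pochC (1 - a) k / ((Nat.factorial k : ℂ) * 2 ^ k) / pochC c k := by
  rw [T, one_div, inv_pow]; ring

lemma aux2 (c₁ c₂ w p q : ℂ) (hq : q ≠ 0) (hp : p ≠ 0) (h : q * c₂ = c₁ * p) :
    c₁ * (w / q) = c₂ * (w / p) := by
  field_simp
  linear_combination (-w) * h

lemma step2 (a : ℂ) {b : ℂ} (hb : ∀ j : ℕ, b + (j : ℂ) ≠ 0) (k : ℕ) :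
    b * (b + 1) * T a b k = (b + k) * (b + k + 1) * T a (b + 2) k := by
  rw [T_eq, T_eq]
  exact aux2 _ _ _ _ _ (pochC_ne_zero hb k) (pochC_ne_zero (shift2 hb) k) (pochC_add_two b k)

lemma d_succ (a : ℂ) {b : ℂ} (hb : ∀ j : ℕ, b + (j : ℂ) ≠ 0) (k : ℕ) :
    2 * ((k + 1 : ℕ) : ℂ) * (b + ((k + 1 : ℕ) : ℂ) + 1) * T a (b + 2) (k + 1)
      = (a + k) * (1 - a + k) * T a (b + 2) k := by
  rw [T_succ a (shift2 hb) k]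
  have h1 : (b + 2) + (k : ℂ) ≠ 0 := shift2 hb k
  have h2 : ((k : ℂ) + 1) ≠ 0 := by
    have := (Nat.cast_ne_zero (R := ℂ)).mpr (Nat.succ_ne_zero k)
    push_cast at this; exact this
  push_cast
  field_simp
  ring

lemma key_rec (a : ℂ) {b : ℂ} (hb : ∀ j : ℕ, b + (j : ℂ) ≠ 0) :
    b * (b + 1) * ∑' k, T a b k = (b + a) * (b + 1 - a) * ∑' k, T a (b + 2) k := by
  have S1 : Summable (fun k => b * (b + 1) * T a b k) := (summable_T a hb).mul_left _
  have S2 : Summable (fun k => (b + a) * (b + 1 - a) * T a (b + 2) k) :=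
    (summable_T a (shift2 hb)).mul_left _
  rw [← tsum_mul_left, ← tsum_mul_left]
  set d : ℕ → ℂ := fun k => 2 * (k : ℂ) * (b + (k : ℂ) + 1) * T a (b + 2) k with hd
  have hv : ∀ k, b * (b + 1) * T a b k - (b + a) * (b + 1 - a) * T a (b + 2) k
      = d k - d (k + 1) := by
    intro k
    rw [step2 a hb k, hd]
    simp only
    rw [d_succ a hb k]
    push_cast
    ring
  have hdlim : Tendsto d atTop (𝓝 0) := by
    rw [← tendsto_add_atTop_iff_nat 1]
    have hD := D_tendsto_zero a (shift2 hb)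
    refine Tendsto.congr (fun n => ?_) hD
    exact (d_succ a hb n).symm
  have hpartial : Tendsto
      (fun n => ∑ k ∈ Finset.range n,
        (b * (b + 1) * T a b k - (b + a) * (b + 1 - a) * T a (b + 2) k)) atTop (𝓝 0) := by
    have he : ∀ n, (∑ k ∈ Finset.range n,
        (b * (b + 1) * T a b k - (b + a) * (b + 1 - a) * T a (b + 2) k)) = - d n := by
      intro n
      rw [Finset.sum_congr rfl (fun k _ => hv k), Finset.sum_range_sub' d n]
      have : d 0 = 0 := by simp [hd]
      rw [this, zero_sub]
    simp only [he]
    simpa using hdlim.neg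
  have Sv := S1.sub S2
  have h1 := Sv.hasSum.tendsto_sum_nat
  have h2 : ∑' k, (b * (b + 1) * T a b k - (b + a) * (b + 1 - a) * T a (b + 2) k) = 0 :=
    tendsto_nhds_unique h1 hpartial
  rw [Summable.tsum_sub S1 S2] at h2
  exact sub_eq_zero.mp h2

/-! ## Iteration -/

noncomputable def F (a c : ℂ) : ℂ := ∑' k, T a c k

lemma hb_shift {b : ℂ} (hb : ∀ j : ℕ, b + (j : ℂ) ≠ 0) (n : ℕ) :
    ∀ j : ℕ, b + 2 * (n : ℂ) + (j : ℂ) ≠ 0 := by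
  intro j h
  apply hb (2 * n + j)
  push_cast
  linear_combination h

lemma solve_step {β u X Y : ℂ} (hβ : β ≠ 0) (hβ1 : β + 1 ≠ 0)
    (h : β * (β + 1) * X = u * Y) : X = u / (β * (β + 1)) * Y := by
  field_simp
  linear_combination h

lemma iterate_gen {P : ℂ → ℂ} {b : ℂ} (q : ℕ → ℂ)
    (step : ∀ n : ℕ, P (b + 2 * (n : ℂ)) = q n * P (b + 2 * (n : ℂ) + 2)) (n : ℕ) :
    P b = (∏ j ∈ Finset.range n, q j) * P (b + 2 * (n : ℂ)) := by
  induction n with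
  | zero => simp
  | succ n ih =>
    rw [ih, step n, Finset.prod_range_succ]
    rw [show b + 2 * ((n + 1 : ℕ) : ℂ) = b + 2 * (n : ℂ) + 2 by push_cast; ring]
    ring

noncomputable def q (a b : ℂ) (j : ℕ) : ℂ :=
  (b + 2 * (j : ℂ) + a) * (b + 2 * (j : ℂ) + 1 - a) / ((b + 2 * (j : ℂ)) * (b + 2 * (j : ℂ) + 1))

lemma F_step (a : ℂ) {b : ℂ} (hb : ∀ j : ℕ, b + (j : ℂ) ≠ 0) (n : ℕ) :
    F a (b + 2 * (n : ℂ)) = q a b n * F a (b + 2 * (n : ℂ) + 2) := by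
  have hb' := hb_shift hb n
  have h0 : b + 2 * (n : ℂ) ≠ 0 := by simpa using hb' 0
  have h1 : b + 2 * (n : ℂ) + 1 ≠ 0 := by simpa using hb' 1
  have h := key_rec a hb'
  rw [q]
  exact solve_step h0 h1 h

lemma F_iter (a : ℂ) {b : ℂ} (hb : ∀ j : ℕ, b + (j : ℂ) ≠ 0) (n : ℕ) :
    F a b = (∏ j ∈ Finset.range n, q a b j) * F a (b + 2 * (n : ℂ)) :=
  iterate_gen (q a b) (F_step a hb) n

/-! ## Limit of F -/

lemma norm_add_nat_ge (b : ℂ) (m : ℕ) : (m : ℝ) - ‖b‖ ≤ ‖b + (m : ℂ)‖ := by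
  have h2 : ‖(m : ℂ)‖ ≤ ‖b + (m : ℂ)‖ + ‖b‖ := by
    have h3 := norm_sub_le (b + (m : ℂ)) b
    simpa using h3
  have h4 : ‖(m : ℂ)‖ = (m : ℝ) := by simp
  linarith

lemma aux4 (x p m : ℂ) : x / (p * m * 2) = x / (m * 2) * p⁻¹ := by ring

lemma norm_cast_succ (k : ℕ) : ‖((k : ℂ) + 1)‖ = (k : ℝ) + 1 := by
  rw [show ((k : ℂ) + 1) = ((k + 1 : ℕ) : ℂ) by push_cast; ring, Complex.norm_natCast]
  push_cast; ring

/-- uniform bound: with `A = max ‖a‖ ‖1-a‖` and `N` large, `‖T a (b+2(N+n)) k‖ ≤ (8/9)^k`. -/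
lemma T_bound (a : ℂ) {b : ℂ} (hb : ∀ j : ℕ, b + (j : ℂ) ≠ 0) {N : ℕ}
    (hN : ‖b‖ + 9 * (max ‖a‖ ‖1 - a‖) ^ 2 + 9 * (max ‖a‖ ‖1 - a‖) + 9 ≤ (N : ℝ))
    (n : ℕ) : ∀ k, ‖T a (b + 2 * ((N + n : ℕ) : ℂ)) k‖ ≤ (8 / 9 : ℝ) ^ k := by
  set A := max ‖a‖ ‖1 - a‖ with hA
  have hA0 : 0 ≤ A := le_trans (norm_nonneg a) (le_max_left _ _)
  have hb0 : 0 ≤ ‖b‖ := norm_nonneg b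
  intro k
  induction k with
  | zero => simp [T_zero]
  | succ k ih =>
    have hc := hb_shift hb (N + n)
    rw [T_succ a hc k, norm_mul]
    have hden : (2 * ((N + n : ℕ) : ℝ) + k) - ‖b‖ ≤ ‖b + 2 * ((N + n : ℕ) : ℂ) + (k : ℂ)‖ := by
      have := norm_add_nat_ge b (2 * (N + n) + k)
      push_cast at this ⊢
      calc 2 * ((N : ℝ) + n) + k - ‖b‖ ≤ ‖b + (2 * ((N : ℝ) + n) + k : ℝ)‖ := by
            convert this using 3 <;> push_cast <;> ring
        _ = ‖b + 2 * ((N : ℂ) + n) + (k : ℂ)‖ := by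
            congr 1; push_cast; ring
    have hDpos : (0 : ℝ) < 2 * ((N + n : ℕ) : ℝ) + k - ‖b‖ := by
      push_cast
      nlinarith [Nat.cast_nonneg (α := ℝ) n, Nat.cast_nonneg (α := ℝ) k]
    have hcnorm : 0 < ‖b + 2 * ((N + n : ℕ) : ℂ) + (k : ℂ)‖ := lt_of_lt_of_le hDpos hden
    have hratio : ‖(a + k) * (1 - a + k) / ((b + 2 * ((N + n : ℕ) : ℂ) + k) * ((k : ℂ) + 1) * 2)‖
        ≤ (8 / 9 : ℝ) := by
      rw [norm_div, norm_mul, norm_mul, norm_mul, norm_cast_succ]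
      have h2 : ‖(2 : ℂ)‖ = (2 : ℝ) := by simp
      rw [h2]
      have hnum1 : ‖a + (k : ℂ)‖ ≤ A + k := by
        have := norm_add_le a (k : ℂ)
        have hk : ‖(k : ℂ)‖ = (k : ℝ) := by simp
        have : ‖a + (k : ℂ)‖ ≤ ‖a‖ + k := by rw [← hk]; exact this
        have ha : ‖a‖ ≤ A := le_max_left _ _
        linarith
      have hnum2 : ‖1 - a + (k : ℂ)‖ ≤ A + k := by
        have h5 := norm_add_le (1 - a) (k : ℂ)
        have hk : ‖(k : ℂ)‖ = (k : ℝ) := by simp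
        have ha : ‖1 - a‖ ≤ A := le_max_right _ _
        rw [hk] at h5
        linarith
      rw [div_le_iff₀ (by positivity)]
      have hstep : ‖(a + k : ℂ)‖ * ‖(1 - a + k : ℂ)‖ ≤ (A + k) * (A + k) :=
        mul_le_mul hnum1 hnum2 (norm_nonneg _) (by positivity)
      refine le_trans hstep ?_
      have hden' : 2 * ((N + n : ℕ) : ℝ) + k - ‖b‖ ≤ ‖b + 2 * ((N + n : ℕ) : ℂ) + (k : ℂ)‖ := hden
      have hkey : (A + k) * (A + k) ≤ 8 / 9 * ((2 * ((N + n : ℕ) : ℝ) + k - ‖b‖) * ((k : ℝ) + 1) * 2) := by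
        push_cast
        nlinarith [Nat.cast_nonneg (α := ℝ) n, Nat.cast_nonneg (α := ℝ) k,
          mul_nonneg (Nat.cast_nonneg (α := ℝ) k) hA0,
          mul_nonneg (Nat.cast_nonneg (α := ℝ) k) (Nat.cast_nonneg (α := ℝ) n),
          mul_nonneg (Nat.cast_nonneg (α := ℝ) k) (Nat.cast_nonneg (α := ℝ) k)]
      refine le_trans hkey ?_
      have : (0 : ℝ) ≤ 8 / 9 := by norm_num
      gcongr
    calc ‖(a + k) * (1 - a + k) / ((b + 2 * ((N + n : ℕ) : ℂ) + k) * ((k : ℂ) + 1) * 2)‖ *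
          ‖T a (b + 2 * ((N + n : ℕ) : ℂ)) k‖
        ≤ (8 / 9 : ℝ) * (8 / 9 : ℝ) ^ k := by
          exact mul_le_mul hratio ih (norm_nonneg _) (by norm_num)
      _ = (8 / 9 : ℝ) ^ (k + 1) := by rw [pow_succ]; ring

/-- pointwise limit of terms -/
lemma T_pointwise (a : ℂ) {b : ℂ} (hb : ∀ j : ℕ, b + (j : ℂ) ≠ 0) (N : ℕ) (k : ℕ) :
    Tendsto (fun n : ℕ => T a (b + 2 * ((N + n : ℕ) : ℂ)) k) atTop
      (𝓝 (if k = 0 then 1 else 0)) := by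
  induction k with
  | zero => simp only [if_pos rfl, T_zero]; exact tendsto_const_nhds
  | succ k ih =>
    simp only [Nat.succ_ne_zero, if_neg, ite_false]
    have hrat : Tendsto (fun n : ℕ =>
        (a + k) * (1 - a + k) / ((b + 2 * ((N + n : ℕ) : ℂ) + k) * ((k : ℂ) + 1) * 2)) atTop
        (𝓝 0) := by
      have hcomp : Tendsto (fun n : ℕ => ((b + (k : ℂ)) + ((2 * (N + n) : ℕ) : ℂ))⁻¹) atTop (𝓝 0) := by
        have hmono : Tendsto (fun n : ℕ => 2 * (N + n)) atTop atTop :=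
          tendsto_atTop_mono (fun n => by simp only [id_eq]; omega) tendsto_id
        exact (inv_shift_tendsto (b + k)).comp hmono
      have heq : ∀ n : ℕ, ((b + (k : ℂ)) + ((2 * (N + n) : ℕ) : ℂ))⁻¹
          = (b + 2 * ((N + n : ℕ) : ℂ) + (k : ℂ))⁻¹ := by
        intro n; congr 1; push_cast; ring
      have hinv : Tendsto (fun n : ℕ => (b + 2 * ((N + n : ℕ) : ℂ) + (k : ℂ))⁻¹) atTop (𝓝 0) :=
        hcomp.congr heq
      have hmul := hinv.const_mul ((a + k) * (1 - a + k) / (((k : ℂ) + 1) * 2))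
      rw [mul_zero] at hmul
      refine hmul.congr (fun n => ?_)
      rw [← aux4]
    have := hrat.mul ih
    rw [zero_mul] at this
    refine this.congr (fun n => ?_)
    rw [T_succ a (hb_shift hb (N + n)) k]

lemma F_tendsto (a : ℂ) {b : ℂ} (hb : ∀ j : ℕ, b + (j : ℂ) ≠ 0) :
    Tendsto (fun n : ℕ => F a (b + 2 * (n : ℂ))) atTop (𝓝 1) := by
  obtain ⟨N, hN⟩ := exists_nat_ge (‖b‖ + 9 * (max ‖a‖ ‖1 - a‖) ^ 2 + 9 * (max ‖a‖ ‖1 - a‖) + 9)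
  rw [← tendsto_add_atTop_iff_nat N]
  have key : Tendsto (fun n : ℕ => F a (b + 2 * ((N + n : ℕ) : ℂ))) atTop (𝓝 1) := by
    have hsum : Summable (fun k : ℕ => (8 / 9 : ℝ) ^ k) :=
      summable_geometric_of_lt_one (by norm_num) (by norm_num)
    have hlim := tendsto_tsum_of_dominated_convergence (f := fun (n : ℕ) (k : ℕ) =>
        T a (b + 2 * ((N + n : ℕ) : ℂ)) k) (g := fun k => if k = 0 then (1 : ℂ) else 0)
        (𝓕 := atTop) hsum (T_pointwise a hb N)
        (Eventually.of_forall (fun n => T_bound a hb hN n))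
    have hone : ∑' k : ℕ, (if k = 0 then (1 : ℂ) else 0) = 1 := by
      rw [tsum_eq_single 0 (fun k hk => by simp [hk])]
      simp
    rw [hone] at hlim
    exact hlim
  refine key.congr (fun n => ?_)
  congr 2
  push_cast
  ring

/-! ## Gamma side -/

lemma Gamma_ne_zero' {s : ℂ} (hs : ∀ j : ℕ, s + (j : ℂ) ≠ 0) : Complex.Gamma s ≠ 0 := by
  rw [Ne, Complex.Gamma_eq_zero_iff]
  rintro ⟨m, rfl⟩
  exact hs m (by simp)

lemma Gamma_shift {s : ℂ} (hs : ∀ j : ℕ, s + (j : ℂ) ≠ 0) (n : ℕ) :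
    Complex.Gamma (s + n) = (∏ j ∈ Finset.range n, (s + j)) * Complex.Gamma s := by
  induction n with
  | zero => simp
  | succ n ih =>
    have h1 : s + ((n + 1 : ℕ) : ℂ) = (s + n) + 1 := by push_cast; ring
    rw [h1, Complex.Gamma_add_one _ (hs n), ih, Finset.prod_range_succ]
    ring

noncomputable def G (a c : ℂ) : ℂ :=
  Complex.Gamma (c / 2) * Complex.Gamma ((c + 1) / 2) /
    (Complex.Gamma ((a + c) / 2) * Complex.Gamma ((c + 1 - a) / 2))

lemma G_key (a : ℂ) {b : ℂ} (hb : ∀ j : ℕ, b + (j : ℂ) ≠ 0)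
    (hA : ∀ j : ℕ, (a + b) / 2 + (j : ℂ) ≠ 0) (hB : ∀ j : ℕ, (b + 1 - a) / 2 + (j : ℂ) ≠ 0) :
    b * (b + 1) * G a b = (b + a) * (b + 1 - a) * G a (b + 2) := by
  have hb0 : b ≠ 0 := by simpa using hb 0
  have hb1 : b + 1 ≠ 0 := by simpa using hb 1
  have hbh : b / 2 ≠ 0 := div_ne_zero hb0 two_ne_zero
  have hb1h : (b + 1) / 2 ≠ 0 := div_ne_zero hb1 two_ne_zero
  have hA0 : (a + b) / 2 ≠ 0 := by simpa using hA 0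
  have hB0 : (b + 1 - a) / 2 ≠ 0 := by simpa using hB 0
  have hGA : Complex.Gamma ((a + b) / 2) ≠ 0 := Gamma_ne_zero' hA
  have hGB : Complex.Gamma ((b + 1 - a) / 2) ≠ 0 := Gamma_ne_zero' hB
  rw [G, G]
  rw [show (b + 2) / 2 = b / 2 + 1 by ring, Complex.Gamma_add_one _ hbh]
  rw [show (b + 2 + 1) / 2 = (b + 1) / 2 + 1 by ring, Complex.Gamma_add_one _ hb1h]
  rw [show (a + (b + 2)) / 2 = (a + b) / 2 + 1 by ring, Complex.Gamma_add_one _ hA0]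
  rw [show (b + 2 + 1 - a) / 2 = (b + 1 - a) / 2 + 1 by ring, Complex.Gamma_add_one _ hB0]
  rw [mul_div_assoc', mul_div_assoc',
    div_eq_div_iff (mul_ne_zero hGA hGB)
      (mul_ne_zero (mul_ne_zero hA0 hGA) (mul_ne_zero hB0 hGB))]
  ring

lemma G_step (a : ℂ) {b : ℂ} (hb : ∀ j : ℕ, b + (j : ℂ) ≠ 0)
    (hA : ∀ j : ℕ, (a + b) / 2 + (j : ℂ) ≠ 0) (hB : ∀ j : ℕ, (b + 1 - a) / 2 + (j : ℂ) ≠ 0)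
    (n : ℕ) : G a (b + 2 * (n : ℂ)) = q a b n * G a (b + 2 * (n : ℂ) + 2) := by
  have hb' := hb_shift hb n
  have hA' : ∀ j : ℕ, (a + (b + 2 * (n : ℂ))) / 2 + (j : ℂ) ≠ 0 := by
    intro j h
    apply hA (n + j)
    push_cast
    linear_combination h
  have hB' : ∀ j : ℕ, ((b + 2 * (n : ℂ)) + 1 - a) / 2 + (j : ℂ) ≠ 0 := by
    intro j h
    apply hB (n + j)
    push_cast
    linear_combination h
  have h0 : b + 2 * (n : ℂ) ≠ 0 := by simpa using hb' 0
  have h1 : b + 2 * (n : ℂ) + 1 ≠ 0 := by simpa using hb' 1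
  exact solve_step h0 h1 (G_key a hb' hA' hB')

lemma G_iter (a : ℂ) {b : ℂ} (hb : ∀ j : ℕ, b + (j : ℂ) ≠ 0)
    (hA : ∀ j : ℕ, (a + b) / 2 + (j : ℂ) ≠ 0) (hB : ∀ j : ℕ, (b + 1 - a) / 2 + (j : ℂ) ≠ 0)
    (n : ℕ) : G a b = (∏ j ∈ Finset.range n, q a b j) * G a (b + 2 * (n : ℂ)) :=
  iterate_gen (q a b) (G_step a hb hA hB) n

lemma G_tendsto (a : ℂ) {b : ℂ} (hb : ∀ j : ℕ, b + (j : ℂ) ≠ 0)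
    (hA : ∀ j : ℕ, (a + b) / 2 + (j : ℂ) ≠ 0) (hB : ∀ j : ℕ, (b + 1 - a) / 2 + (j : ℂ) ≠ 0) :
    Tendsto (fun n : ℕ => G a (b + 2 * (n : ℂ))) atTop (𝓝 1) := by
  set z := b / 2 with hzdef
  set w := (b + 1) / 2 with hwdef
  set z' := (a + b) / 2 with hz'def
  set w' := (b + 1 - a) / 2 with hw'def
  have hz : ∀ j : ℕ, z + (j : ℂ) ≠ 0 := by
    intro j h; apply hb (2 * j); push_cast; linear_combination 2 * h
  have hw : ∀ j : ℕ, w + (j : ℂ) ≠ 0 := by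
    intro j h; apply hb (2 * j + 1); push_cast; linear_combination 2 * h
  have hΓz : Complex.Gamma z ≠ 0 := Gamma_ne_zero' hz
  have hΓw : Complex.Gamma w ≠ 0 := Gamma_ne_zero' hw
  have hΓz' : Complex.Gamma z' ≠ 0 := Gamma_ne_zero' hA
  have hΓw' : Complex.Gamma w' ≠ 0 := Gamma_ne_zero' hB
  set R : ℂ → ℕ → ℂ := fun s n => ∏ j ∈ Finset.range (n + 1), (s + j) with hRdef
  have hSR : ∀ (s : ℂ), (∀ j : ℕ, s + (j : ℂ) ≠ 0) → ∀ n : ℕ,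
      Complex.GammaSeq s n * R s n = (n : ℂ) ^ s * (Nat.factorial n : ℂ) := by
    intro s hs n
    have hR : R s n ≠ 0 := Finset.prod_ne_zero_iff.2 fun i _ => hs i
    rw [Complex.GammaSeq, div_mul_cancel₀ _ hR]
  have hRne : ∀ (s : ℂ), (∀ j : ℕ, s + (j : ℂ) ≠ 0) → ∀ n : ℕ, R s n ≠ 0 :=
    fun s hs n => Finset.prod_ne_zero_iff.2 fun i _ => hs i
  have hcpow_ne : ∀ (s : ℂ) (n : ℕ), 1 ≤ n → ((n : ℂ)) ^ s ≠ 0 := by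
    intro s n hn h
    rw [Complex.cpow_eq_zero_iff] at h
    exact (Nat.cast_ne_zero.mpr (by omega : n ≠ 0)) h.1
  have hfact_ne : ∀ n : ℕ, ((Nat.factorial n : ℂ)) ≠ 0 :=
    fun n => Nat.cast_ne_zero.mpr (Nat.factorial_ne_zero n)
  have hSne : ∀ (s : ℂ), (∀ j : ℕ, s + (j : ℂ) ≠ 0) → ∀ n : ℕ, 1 ≤ n →
      Complex.GammaSeq s n ≠ 0 := by
    intro s hs n hn
    have h1 := hSR s hs n
    have h2 : (n : ℂ) ^ s * (Nat.factorial n : ℂ) ≠ 0 :=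
      mul_ne_zero (hcpow_ne s n hn) (hfact_ne n)
    exact left_ne_zero_of_mul (h1 ▸ h2)
  -- the key pointwise identity for n ≥ 1
  have claim : ∀ n : ℕ, 1 ≤ n → G a (b + 2 * ((n + 1 : ℕ) : ℂ))
      = Complex.GammaSeq z' n * Complex.GammaSeq w' n /
          (Complex.GammaSeq z n * Complex.GammaSeq w n) *
        (Complex.Gamma z * Complex.Gamma w / (Complex.Gamma z' * Complex.Gamma w')) := by
    intro n hn
    have hn0 : ((n : ℂ)) ≠ 0 := Nat.cast_ne_zero.mpr (by omega)
    have hpow : (n : ℂ) ^ z * (n : ℂ) ^ w = (n : ℂ) ^ z' * (n : ℂ) ^ w' := by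
      rw [← Complex.cpow_add _ _ hn0, ← Complex.cpow_add _ _ hn0]
      congr 1
      rw [hzdef, hwdef, hz'def, hw'def]; ring
    have e1 : (b + 2 * ((n + 1 : ℕ) : ℂ)) / 2 = z + ((n + 1 : ℕ) : ℂ) := by
      rw [hzdef]; push_cast; ring
    have e2 : (b + 2 * ((n + 1 : ℕ) : ℂ) + 1) / 2 = w + ((n + 1 : ℕ) : ℂ) := by
      rw [hwdef]; push_cast; ring
    have e3 : (a + (b + 2 * ((n + 1 : ℕ) : ℂ))) / 2 = z' + ((n + 1 : ℕ) : ℂ) := by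
      rw [hz'def]; push_cast; ring
    have e4 : (b + 2 * ((n + 1 : ℕ) : ℂ) + 1 - a) / 2 = w' + ((n + 1 : ℕ) : ℂ) := by
      rw [hw'def]; push_cast; ring
    rw [G, e1, e2, e3, e4, Gamma_shift hz (n + 1), Gamma_shift hw (n + 1),
      Gamma_shift hA (n + 1), Gamma_shift hB (n + 1)]
    -- now : (R z n * Γz * (R w n * Γw)) / (R z' n * Γz' * (R w' n * Γw')) = ...
    have hratio : R z n * R w n / (R z' n * R w' n)
        = Complex.GammaSeq z' n * Complex.GammaSeq w' n /
            (Complex.GammaSeq z n * Complex.GammaSeq w n) := by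
      rw [div_eq_div_iff (mul_ne_zero (hRne z' hA n) (hRne w' hB n))
        (mul_ne_zero (hSne z hz n hn) (hSne w hw n hn))]
      calc R z n * R w n * (Complex.GammaSeq z n * Complex.GammaSeq w n)
          = (Complex.GammaSeq z n * R z n) * (Complex.GammaSeq w n * R w n) := by ring
        _ = ((n : ℂ) ^ z * (Nat.factorial n : ℂ)) * ((n : ℂ) ^ w * (Nat.factorial n : ℂ)) := by
            rw [hSR z hz n, hSR w hw n]
        _ = ((n : ℂ) ^ z' * (Nat.factorial n : ℂ)) * ((n : ℂ) ^ w' * (Nat.factorial n : ℂ)) := by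
            linear_combination ((Nat.factorial n : ℂ) * (Nat.factorial n : ℂ)) * hpow
        _ = (Complex.GammaSeq z' n * R z' n) * (Complex.GammaSeq w' n * R w' n) := by
            rw [hSR z' hA n, hSR w' hB n]
        _ = Complex.GammaSeq z' n * Complex.GammaSeq w' n * (R z' n * R w' n) := by ring
    rw [← hratio]
    ring
  have hlim : Tendsto (fun n : ℕ => Complex.GammaSeq z' n * Complex.GammaSeq w' n /
      (Complex.GammaSeq z n * Complex.GammaSeq w n) *
      (Complex.Gamma z * Complex.Gamma w / (Complex.Gamma z' * Complex.Gamma w'))) atTop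
      (𝓝 (Complex.Gamma z' * Complex.Gamma w' / (Complex.Gamma z * Complex.Gamma w) *
        (Complex.Gamma z * Complex.Gamma w / (Complex.Gamma z' * Complex.Gamma w')))) := by
    refine Tendsto.mul_const _ ?_
    exact (((Complex.GammaSeq_tendsto_Gamma z').mul (Complex.GammaSeq_tendsto_Gamma w')).div
      ((Complex.GammaSeq_tendsto_Gamma z).mul (Complex.GammaSeq_tendsto_Gamma w))
      (mul_ne_zero hΓz hΓw))
  have hval : Complex.Gamma z' * Complex.Gamma w' / (Complex.Gamma z * Complex.Gamma w) *
      (Complex.Gamma z * Complex.Gamma w / (Complex.Gamma z' * Complex.Gamma w')) = 1 := by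
    field_simp
  rw [hval] at hlim
  have hshift : Tendsto (fun n : ℕ => G a (b + 2 * ((n + 1 : ℕ) : ℂ))) atTop (𝓝 1) := by
    refine Tendsto.congr' ?_ hlim
    filter_upwards [eventually_ge_atTop 1] with n hn
    exact (claim n hn).symm
  rw [← tendsto_add_atTop_iff_nat 1]
  exact hshift.congr (fun n => by push_cast; norm_num)

end BA

open BA

/-- Bailey's second theorem: `₂F₁(a, 1-a; b; 1/2)`. -/
theorem hyp2F1_half (a b : ℂ) (hb : ∀ j : ℕ, b + (j : ℂ) ≠ 0) :
    hyp2F1C a (1 - a) b (1 / 2) =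
      (2 : ℂ) ^ (1 - b) * (Real.sqrt Real.pi : ℂ) * Complex.Gamma b /
        (Complex.Gamma ((a + b) / 2) * Complex.Gamma ((1 + b - a) / 2)) := by
  have hFdef : hyp2F1C a (1 - a) b (1 / 2) = F a b := rfl
  by_cases hA : ∀ j : ℕ, (a + b) / 2 + (j : ℂ) ≠ 0
  · by_cases hB : ∀ j : ℕ, (b + 1 - a) / 2 + (j : ℂ) ≠ 0
    · -- nondegenerate case
      have hFG : ∀ n : ℕ, F a b * G a (b + 2 * (n : ℂ)) = G a b * F a (b + 2 * (n : ℂ)) := by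
        intro n
        rw [F_iter a hb n, G_iter a hb hA hB n]
        ring
      have h1 : Tendsto (fun n : ℕ => F a b * G a (b + 2 * (n : ℂ))) atTop (𝓝 (F a b * 1)) :=
        (G_tendsto a hb hA hB).const_mul _
      have h2 : Tendsto (fun n : ℕ => G a b * F a (b + 2 * (n : ℂ))) atTop (𝓝 (G a b * 1)) :=
        (F_tendsto a hb).const_mul _
      have h3 := tendsto_nhds_unique h1 (h2.congr (fun n => (hFG n).symm))
      have hFGeq : F a b = G a b := by simpa using h3
      rw [hFdef, hFGeq, G]
      rw [show (b + 1) / 2 = b / 2 + 1 / 2 by ring]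
      rw [Complex.Gamma_mul_Gamma_add_half (b / 2)]
      rw [show (2 : ℂ) * (b / 2) = b by ring]
      rw [show (b + 1 - a) / 2 = (1 + b - a) / 2 by ring]
      ring
    · -- Γ((1+b-a)/2) = 0
      push_neg at hB
      obtain ⟨m, hm⟩ := hB
      have hG0 : Complex.Gamma ((1 + b - a) / 2) = 0 :=
        (Complex.Gamma_eq_zero_iff _).mpr ⟨m, by linear_combination hm⟩
      rw [hG0, mul_zero, div_zero, hFdef, F_iter a hb (m + 1)]
      have hq : q a b m = 0 := by
        rw [q, show b + 2 * (m : ℂ) + 1 - a = 0 by linear_combination 2 * hm, mul_zero, zero_div]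
      rw [Finset.prod_eq_zero (Finset.self_mem_range_succ m) hq, zero_mul]
  · -- Γ((a+b)/2) = 0
    push_neg at hA
    obtain ⟨m, hm⟩ := hA
    have hG0 : Complex.Gamma ((a + b) / 2) = 0 :=
      (Complex.Gamma_eq_zero_iff _).mpr ⟨m, by linear_combination hm⟩
    rw [hG0, zero_mul, div_zero, hFdef, F_iter a hb (m + 1)]
    have hq : q a b m = 0 := by
      rw [q, show b + 2 * (m : ℂ) + a = 0 by linear_combination 2 * hm, zero_mul, zero_div]
    rw [Finset.prod_eq_zero (Finset.self_mem_range_succ m) hq, zero_mul]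
end
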